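/- arXiv:2506.08333 — 5 statements merged into one kernel-verified Lean document; each statement's English description precedes it below -/
import Mathlib

section
/- Let β⁺,β⁻ ∈ L¹([0,1]³) be nonnegative. Then the functional J^{(β⁺,β⁻)} : W₀ → [0,∞) is lower semicontinuous with respect to the weak topology inherited from L²([0,1]³): whenever φ_n, φ ∈ W₀ and φ_n → φ weakly in L²([0,1]³), one has J^{(β⁺,β⁻)}(φ) ≤ liminf_{n→∞} J^{(β⁺,β⁻)}(φ_n). -/
/-!
For `A, B ≥ 0` the integrand has the dual representation
`(√A - √B)² = sup_{s > 0} (A (1 - s) + B (1 - 1/s))`, the supremum being attained at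
`s = √B / √A`. With `A = β⁺ (1 - ψ)` and `B = β⁻ ψ` and a fixed weight `s(p)`, the integral of the
right-hand side is an affine functional of `ψ` that minorizes `J`; when `β^± (1 - s)` and
`β^± (1 - 1/s)` are bounded, its linear part is integration against an `L²` function, so it is
weakly continuous and its value at `φ` is at most `liminf J(φₙ)`. The weights
`s_k = (√B + 1/(k+1)) / (√A + 1/(k+1))` on `{β⁺ ≤ k, β⁻ ≤ k}` (and `1` elsewhere) give pointwise
values between `(√A - √B)² - (√A + √B)/(k+1)` and `(√A - √B)²`, so by dominated convergence
their integrals at `φ` tend to `J(φ)`.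
-/

open MeasureTheory Filter Set
open scoped ENNReal

noncomputable section

/-- The unit interval `[0,1]` as a subset of `ℝ`. -/
def I01 : Set ℝ := Set.Icc 0 1

/-- The unit cube `[0,1]³`. -/
def cube3 : Set (ℝ × ℝ × ℝ) := I01 ×ˢ I01 ×ˢ I01

/-- Membership in `W₀`: a measurable function `[0,1]³ → [0,1]`. -/
def MemW0 (φ : ℝ × ℝ × ℝ → ℝ) : Prop :=
  Measurable φ ∧ ∀ p ∈ cube3, φ p ∈ Set.Icc (0:ℝ) 1

/-- The rate function
`J^{(β⁺,β⁻)}(φ) = ∫_{[0,1]³} (√(β⁺(1−φ)) − √(β⁻φ))²`. -/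
def Jfun (βp βm φ : ℝ × ℝ × ℝ → ℝ) : ℝ :=
  ∫ p in cube3, (Real.sqrt (βp p * (1 - φ p)) - Real.sqrt (βm p * φ p)) ^ 2

open Topology

def hellingerMinorant (s A B : ℝ) : ℝ := A * (1 - s) + B * (1 - s⁻¹)

theorem sq_sqrt_sub_sqrt_sub_hellingerMinorant {A B s : ℝ} (hA : 0 ≤ A) (hB : 0 ≤ B)
    (hs : 0 < s) :
    (√A - √B) ^ 2 - hellingerMinorant s A B = (s * √A - √B) ^ 2 / s := by
  have hA' := Real.sq_sqrt hA
  have hB' := Real.sq_sqrt hB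
  unfold hellingerMinorant
  field_simp
  linear_combination (s - s ^ 2) * hA' + (s - 1) * hB'

theorem hellingerMinorant_le {A B s : ℝ} (hA : 0 ≤ A) (hB : 0 ≤ B) (hs : 0 < s) :
    hellingerMinorant s A B ≤ (√A - √B) ^ 2 := by
  have := sq_sqrt_sub_sqrt_sub_hellingerMinorant hA hB hs
  have : 0 ≤ (s * √A - √B) ^ 2 / s := by positivity
  linarith

theorem hellingerMinorant_eq_add_mul (s A B x : ℝ) :
    hellingerMinorant s (A * (1 - x)) (B * x)
      = A * (1 - s) + x * (B * (1 - s⁻¹) - A * (1 - s)) := by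
  unfold hellingerMinorant; ring

theorem hellingerMinorant_div_add {a b ε : ℝ} (ha : 0 ≤ a) (hb : 0 ≤ b) (hε : 0 < ε) :
    hellingerMinorant ((b + ε) / (a + ε)) (a ^ 2) (b ^ 2)
      = (a - b) ^ 2 * (a * b + ε * (a + b)) / ((a + ε) * (b + ε)) := by
  unfold hellingerMinorant
  have : 0 < a + ε := by linarith
  have : 0 < b + ε := by linarith
  field_simp
  ring

theorem hellingerMinorant_div_add_nonneg {a b ε : ℝ} (ha : 0 ≤ a) (hb : 0 ≤ b) (hε : 0 < ε) :
    0 ≤ hellingerMinorant ((b + ε) / (a + ε)) (a ^ 2) (b ^ 2) := by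
  rw [hellingerMinorant_div_add ha hb hε]
  positivity

theorem sq_sub_sub_le_hellingerMinorant_div_add {a b ε : ℝ} (ha : 0 ≤ a) (hb : 0 ≤ b)
    (hε : 0 < ε) :
    (a - b) ^ 2 - ε * (a + b) ≤ hellingerMinorant ((b + ε) / (a + ε)) (a ^ 2) (b ^ 2) := by
  rw [hellingerMinorant_div_add ha hb hε, le_div_iff₀ (by positivity)]
  have hab := mul_nonneg ha hb
  have hε2 := mul_nonneg hε.le hε.le
  nlinarith [mul_nonneg hε.le (mul_nonneg hab (add_nonneg ha hb)), mul_nonneg hε2 hab,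
    mul_nonneg hε2 (mul_nonneg hε.le (add_nonneg ha hb))]

theorem abs_one_sub_div_add_le {a b ε M : ℝ} (ha : 0 ≤ a) (haM : a ≤ M) (hb : 0 ≤ b)
    (hbM : b ≤ M) (hε : 0 < ε) : |1 - (b + ε) / (a + ε)| ≤ M / ε := by
  have hpos : 0 < a + ε := by linarith
  rw [one_sub_div hpos.ne', add_sub_add_right_eq_sub, abs_div, abs_of_pos hpos]
  exact div_le_div₀ (by linarith) (abs_sub_le_of_nonneg_of_le ha haM hb hbM) hε (by linarith)

theorem sq_sqrt_sub_sqrt_le_add {A B : ℝ} (hA : 0 ≤ A) (hB : 0 ≤ B) :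
    (√A - √B) ^ 2 ≤ A + B := by
  nlinarith [Real.sq_sqrt hA, Real.sq_sqrt hB, Real.sqrt_nonneg A, Real.sqrt_nonneg B,
    mul_nonneg (Real.sqrt_nonneg A) (Real.sqrt_nonneg B)]

theorem le_liminf_of_tendsto_minorants {ι κ : Type*} {l : Filter ι} {l' : Filter κ}
    [l.NeBot] [l'.NeBot] {J : ι → ℝ} {L : κ → ι → ℝ} {ℓ : κ → ℝ} {x : ℝ}
    (hJ : IsCoboundedUnder (· ≥ ·) l J) (hLJ : ∀ k n, L k n ≤ J n)
    (hL : ∀ k, Tendsto (L k) l (𝓝 (ℓ k))) (hℓ : Tendsto ℓ l' (𝓝 x)) :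
    x ≤ liminf J l := by
  refine le_of_tendsto hℓ (Eventually.of_forall fun k => ?_)
  rw [← (hL k).liminf_eq]
  exact liminf_le_liminf (Eventually.of_forall (hLJ k)) (hL k).isBoundedUnder_ge hJ

section Hellinger

variable {α : Type*} {βp βm : α → ℝ}

def hellingerIntegrand (βp βm ψ : α → ℝ) (p : α) : ℝ :=
  (√(βp p * (1 - ψ p)) - √(βm p * ψ p)) ^ 2

theorem hellingerMinorant_le_hellingerIntegrand {ψ : α → ℝ} {p : α} {s : ℝ} (hp : 0 ≤ βp p)
    (hm : 0 ≤ βm p) (hψ : ψ p ∈ Icc 0 1) (hs : 0 < s) :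
    hellingerMinorant s (βp p * (1 - ψ p)) (βm p * ψ p) ≤ hellingerIntegrand βp βm ψ p :=
  hellingerMinorant_le (mul_nonneg hp (sub_nonneg.2 hψ.2)) (mul_nonneg hm hψ.1) hs

theorem hellingerIntegrand_le_add {ψ : α → ℝ} {p : α} (hp : 0 ≤ βp p) (hm : 0 ≤ βm p)
    (hψ : ψ p ∈ Icc 0 1) : hellingerIntegrand βp βm ψ p ≤ βp p + βm p := by
  obtain ⟨h0, h1⟩ := hψ
  refine (sq_sqrt_sub_sqrt_le_add (by nlinarith) (by nlinarith)).trans ?_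
  nlinarith

def hellingerWeight (βp βm φ : α → ℝ) (k : ℕ) (p : α) : ℝ :=
  if βp p ≤ k ∧ βm p ≤ k then
    (√(βm p * φ p) + 1 / (k + 1)) / (√(βp p * (1 - φ p)) + 1 / (k + 1))
  else 1

theorem hellingerWeight_pos (φ : α → ℝ) (k : ℕ) (p : α) : 0 < hellingerWeight βp βm φ k p := by
  unfold hellingerWeight
  split_ifs <;> positivity

theorem hellingerMinorant_hellingerWeight_nonneg {φ : α → ℝ} {p : α} (hp : 0 ≤ βp p)
    (hm : 0 ≤ βm p) (hφ : φ p ∈ Icc 0 1) (k : ℕ) :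
    0 ≤ hellingerMinorant (hellingerWeight βp βm φ k p) (βp p * (1 - φ p)) (βm p * φ p) := by
  unfold hellingerWeight
  split_ifs
  · have h := hellingerMinorant_div_add_nonneg (Real.sqrt_nonneg (βp p * (1 - φ p)))
      (Real.sqrt_nonneg (βm p * φ p)) (Nat.one_div_pos_of_nat (n := k))
    rwa [Real.sq_sqrt (mul_nonneg hp (sub_nonneg.2 hφ.2)), Real.sq_sqrt (mul_nonneg hm hφ.1)] at h
  · simp [hellingerMinorant]

theorem tendsto_hellingerMinorant_hellingerWeight {φ : α → ℝ} {p : α} (hp : 0 ≤ βp p)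
    (hm : 0 ≤ βm p) (hφ : φ p ∈ Icc 0 1) :
    Tendsto (fun k => hellingerMinorant (hellingerWeight βp βm φ k p)
      (βp p * (1 - φ p)) (βm p * φ p)) atTop (𝓝 (hellingerIntegrand βp βm φ p)) := by
  have hA : 0 ≤ βp p * (1 - φ p) := mul_nonneg hp (sub_nonneg.2 hφ.2)
  have hB : 0 ≤ βm p * φ p := mul_nonneg hm hφ.1
  set a := √(βp p * (1 - φ p))
  set b := √(βm p * φ p)
  have hε : Tendsto (fun k : ℕ => (a - b) ^ 2 - 1 / ((k : ℝ) + 1) * (a + b)) atTop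
      (𝓝 ((a - b) ^ 2)) := by
    simpa using tendsto_const_nhds.sub (tendsto_one_div_add_atTop_nhds_zero_nat.mul_const (a + b))
  refine tendsto_of_tendsto_of_tendsto_of_le_of_le' hε tendsto_const_nhds ?_
    (Eventually.of_forall fun k => hellingerMinorant_le hA hB (hellingerWeight_pos φ k p))
  filter_upwards [tendsto_natCast_atTop_atTop.eventually_ge_atTop (max (βp p) (βm p))] with k hk
  have h := sq_sub_sub_le_hellingerMinorant_div_add (Real.sqrt_nonneg (βp p * (1 - φ p)))
    (Real.sqrt_nonneg (βm p * φ p)) (Nat.one_div_pos_of_nat (n := k))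
  rw [Real.sq_sqrt hA, Real.sq_sqrt hB] at h
  rwa [hellingerWeight, if_pos ⟨le_of_max_le_left hk, le_of_max_le_right hk⟩]

variable [MeasurableSpace α] {μ : Measure α}

theorem measurable_hellingerIntegrand {ψ : α → ℝ} (hβp : Measurable βp) (hβm : Measurable βm)
    (hψ : Measurable ψ) : Measurable (hellingerIntegrand βp βm ψ) := by
  unfold hellingerIntegrand; fun_prop

theorem integrable_hellingerIntegrand {ψ : α → ℝ} (hβp : Measurable βp) (hβm : Measurable βm)
    (hβp0 : ∀ᵐ p ∂μ, 0 ≤ βp p) (hβm0 : ∀ᵐ p ∂μ, 0 ≤ βm p)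
    (hβp_int : Integrable βp μ) (hβm_int : Integrable βm μ)
    (hψ : Measurable ψ) (hψ01 : ∀ᵐ p ∂μ, ψ p ∈ Icc 0 1) :
    Integrable (hellingerIntegrand βp βm ψ) μ := by
  refine (hβp_int.add hβm_int).mono'
    (measurable_hellingerIntegrand hβp hβm hψ).aestronglyMeasurable ?_
  filter_upwards [hβp0, hβm0, hψ01] with p hp hm hψp
  rw [hellingerIntegrand, Real.norm_of_nonneg (sq_nonneg _)]
  exact hellingerIntegrand_le_add hp hm hψp

theorem measurable_hellingerWeight {φ : α → ℝ} (hβp : Measurable βp) (hβm : Measurable βm)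
    (hφ : Measurable φ) (k : ℕ) : Measurable (hellingerWeight βp βm φ k) := by
  refine Measurable.ite ?_ (by fun_prop) measurable_const
  exact (measurableSet_le hβp measurable_const).inter (measurableSet_le hβm measurable_const)

theorem exists_bound_hellingerWeight {φ : α → ℝ} (hβp0 : ∀ᵐ p ∂μ, 0 ≤ βp p)
    (hβm0 : ∀ᵐ p ∂μ, 0 ≤ βm p) (hφ01 : ∀ᵐ p ∂μ, φ p ∈ Icc 0 1) (k : ℕ) :
    ∃ C, ∀ᵐ p ∂μ, |βp p * (1 - hellingerWeight βp βm φ k p)| ≤ C ∧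
      |βm p * (1 - (hellingerWeight βp βm φ k p)⁻¹)| ≤ C := by
  refine ⟨k * (√k / (1 / (k + 1))), ?_⟩
  filter_upwards [hβp0, hβm0, hφ01] with p hp hm ⟨h0, h1⟩
  unfold hellingerWeight
  split_ifs with hk
  · obtain ⟨hpk, hmk⟩ := hk
    have ha : √(βp p * (1 - φ p)) ≤ √k := Real.sqrt_le_sqrt (by nlinarith)
    have hb : √(βm p * φ p) ≤ √k := Real.sqrt_le_sqrt (by nlinarith)
    rw [abs_mul, abs_mul, abs_of_nonneg hp, abs_of_nonneg hm, inv_div]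
    constructor
    · gcongr
      exact abs_one_sub_div_add_le (Real.sqrt_nonneg _) ha (Real.sqrt_nonneg _) hb (by positivity)
    · gcongr
      exact abs_one_sub_div_add_le (Real.sqrt_nonneg _) hb (Real.sqrt_nonneg _) ha (by positivity)
  · simp only [sub_self, inv_one, mul_zero, abs_zero, and_self]
    positivity

variable [IsFiniteMeasure μ] {w : α → ℝ} {C : ℝ}

theorem integrable_hellingerMinorant_and_integral_eq (hβp : Measurable βp) (hβm : Measurable βm)
    (hw : Measurable w)
    (hC : ∀ᵐ p ∂μ, |βp p * (1 - w p)| ≤ C ∧ |βm p * (1 - (w p)⁻¹)| ≤ C)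
    {ψ : α → ℝ} (hψ : Measurable ψ) (hψ01 : ∀ᵐ p ∂μ, ψ p ∈ Icc 0 1) :
    Integrable (fun p => hellingerMinorant (w p) (βp p * (1 - ψ p)) (βm p * ψ p)) μ ∧
    ∫ p, hellingerMinorant (w p) (βp p * (1 - ψ p)) (βm p * ψ p) ∂μ
      = ∫ p, βp p * (1 - w p) ∂μ
        + ∫ p, ψ p * (βm p * (1 - (w p)⁻¹) - βp p * (1 - w p)) ∂μ := by
  have hc : Integrable (fun p => βp p * (1 - w p)) μ :=
    Integrable.of_bound (by fun_prop) C (hC.mono fun _ h => h.1)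
  have hg : Integrable (fun p => ψ p * (βm p * (1 - (w p)⁻¹) - βp p * (1 - w p))) μ := by
    refine Integrable.of_bound (by fun_prop) (C + C) ?_
    filter_upwards [hC, hψ01] with p ⟨hcp, hcm⟩ ⟨h0, h1⟩
    rw [Real.norm_eq_abs, abs_mul]
    calc |ψ p| * |βm p * (1 - (w p)⁻¹) - βp p * (1 - w p)| ≤ 1 * (C + C) := by
          gcongr
          · exact abs_le.2 ⟨by linarith, h1⟩
          · exact (abs_sub _ _).trans (add_le_add hcm hcp)
      _ = C + C := one_mul _
  simp only [hellingerMinorant_eq_add_mul]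
  exact ⟨hc.add hg, integral_add hc hg⟩

theorem tendsto_integral_hellingerMinorant (hβp : Measurable βp) (hβm : Measurable βm)
    (hw : Measurable w)
    (hC : ∀ᵐ p ∂μ, |βp p * (1 - w p)| ≤ C ∧ |βm p * (1 - (w p)⁻¹)| ≤ C)
    {ψseq : ℕ → α → ℝ} {ψ : α → ℝ}
    (hψseq : ∀ n, Measurable (ψseq n) ∧ ∀ᵐ p ∂μ, ψseq n p ∈ Icc 0 1)
    (hψ : Measurable ψ) (hψ01 : ∀ᵐ p ∂μ, ψ p ∈ Icc 0 1)
    (hweak : ∀ g : α → ℝ, MemLp g 2 μ →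
      Tendsto (fun n => ∫ p, ψseq n p * g p ∂μ) atTop (𝓝 (∫ p, ψ p * g p ∂μ))) :
    Tendsto (fun n => ∫ p, hellingerMinorant (w p) (βp p * (1 - ψseq n p)) (βm p * ψseq n p) ∂μ)
      atTop (𝓝 (∫ p, hellingerMinorant (w p) (βp p * (1 - ψ p)) (βm p * ψ p) ∂μ)) := by
  have hslope : MemLp (fun p => βm p * (1 - (w p)⁻¹) - βp p * (1 - w p)) 2 μ := by
    refine MemLp.of_bound (by fun_prop) (C + C) ?_
    filter_upwards [hC] with p ⟨hcp, hcm⟩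
    exact (abs_sub _ _).trans (add_le_add hcm hcp)
  simp only [(integrable_hellingerMinorant_and_integral_eq hβp hβm hw hC (hψseq _).1 (hψseq _).2).2,
    (integrable_hellingerMinorant_and_integral_eq hβp hβm hw hC hψ hψ01).2]
  exact (hweak _ hslope).const_add _

theorem integral_hellingerIntegrand_le_liminf (hβp : Measurable βp) (hβm : Measurable βm)
    (hβp0 : ∀ᵐ p ∂μ, 0 ≤ βp p) (hβm0 : ∀ᵐ p ∂μ, 0 ≤ βm p)
    (hβp_int : Integrable βp μ) (hβm_int : Integrable βm μ)
    {φseq : ℕ → α → ℝ} {φ : α → ℝ}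
    (hφseq : ∀ n, Measurable (φseq n) ∧ ∀ᵐ p ∂μ, φseq n p ∈ Icc 0 1)
    (hφ : Measurable φ) (hφ01 : ∀ᵐ p ∂μ, φ p ∈ Icc 0 1)
    (hweak : ∀ g : α → ℝ, MemLp g 2 μ →
      Tendsto (fun n => ∫ p, φseq n p * g p ∂μ) atTop (𝓝 (∫ p, φ p * g p ∂μ))) :
    ∫ p, hellingerIntegrand βp βm φ p ∂μ ≤
      liminf (fun n => ∫ p, hellingerIntegrand βp βm (φseq n) p ∂μ) atTop := by
  have hF : ∀ {ψ}, Measurable ψ → (∀ᵐ p ∂μ, ψ p ∈ Icc 0 1) →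
      Integrable (hellingerIntegrand βp βm ψ) μ :=
    integrable_hellingerIntegrand hβp hβm hβp0 hβm0 hβp_int hβm_int
  have hbound k := exists_bound_hellingerWeight hβp0 hβm0 hφ01 k
  have hw := measurable_hellingerWeight hβp hβm hφ
  refine le_liminf_of_tendsto_minorants (l' := atTop)
    (L := fun k n => ∫ p, hellingerMinorant (hellingerWeight βp βm φ k p)
      (βp p * (1 - φseq n p)) (βm p * φseq n p) ∂μ)
    (ℓ := fun k => ∫ p, hellingerMinorant (hellingerWeight βp βm φ k p)
      (βp p * (1 - φ p)) (βm p * φ p) ∂μ) ?bdd ?minorant ?lim_n ?lim_k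
  case bdd =>
    refine isCoboundedUnder_ge_of_le atTop fun n => integral_mono_ae (hF (hφseq n).1 (hφseq n).2)
      (hβp_int.add hβm_int) ?_
    filter_upwards [hβp0, hβm0, (hφseq n).2] with p hp hm hψ
    exact hellingerIntegrand_le_add hp hm hψ
  case minorant =>
    intro k n
    obtain ⟨C, hC⟩ := hbound k
    refine integral_mono_ae (integrable_hellingerMinorant_and_integral_eq hβp hβm (hw k) hC (hφseq n).1
      (hφseq n).2).1 (hF (hφseq n).1 (hφseq n).2) ?_
    filter_upwards [hβp0, hβm0, (hφseq n).2] with p hp hm hψ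
    exact hellingerMinorant_le_hellingerIntegrand hp hm hψ (hellingerWeight_pos φ k p)
  case lim_n =>
    intro k
    obtain ⟨C, hC⟩ := hbound k
    exact tendsto_integral_hellingerMinorant hβp hβm (hw k) hC hφseq hφ hφ01 hweak
  case lim_k =>
    refine tendsto_integral_of_dominated_convergence _ (fun k => ?_) (hF hφ hφ01) (fun k => ?_) ?_
    · obtain ⟨C, hC⟩ := hbound k
      exact (integrable_hellingerMinorant_and_integral_eq hβp hβm (hw k) hC hφ hφ01).1.aestronglyMeasurable
    · filter_upwards [hβp0, hβm0, hφ01] with p hp hm hφp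
      rw [Real.norm_of_nonneg (hellingerMinorant_hellingerWeight_nonneg hp hm hφp k)]
      exact hellingerMinorant_le_hellingerIntegrand hp hm hφp (hellingerWeight_pos φ k p)
    · filter_upwards [hβp0, hβm0, hφ01] with p hp hm hφp
      exact tendsto_hellingerMinorant_hellingerWeight hp hm hφp

end Hellinger

/-- **Proposition (lower semicontinuity of the rate function `J` in the weak topology).**
If `β⁺, β⁻ ∈ L¹([0,1]³)` are nonnegative and `φₙ → φ` weakly in `L²([0,1]³)` with
`φₙ, φ ∈ W₀`, then `J^{(β⁺,β⁻)}(φ) ≤ liminf J^{(β⁺,β⁻)}(φₙ)`. -/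
theorem Jfun_weakly_lowerSemicontinuous
    (βp βm : ℝ × ℝ × ℝ → ℝ)
    (hβp_meas : Measurable βp) (hβm_meas : Measurable βm)
    (hβp_nonneg : ∀ p, 0 ≤ βp p) (hβm_nonneg : ∀ p, 0 ≤ βm p)
    (hβp_int : IntegrableOn βp cube3) (hβm_int : IntegrableOn βm cube3)
    (φseq : ℕ → ℝ × ℝ × ℝ → ℝ) (φ : ℝ × ℝ × ℝ → ℝ)
    (hφseq : ∀ n, MemW0 (φseq n)) (hφ : MemW0 φ)
    (hweak : ∀ g : ℝ × ℝ × ℝ → ℝ, MemLp g 2 (volume.restrict cube3) →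
      Tendsto (fun n => ∫ p in cube3, φseq n p * g p) atTop
        (nhds (∫ p in cube3, φ p * g p))) :
    Jfun βp βm φ ≤ Filter.liminf (fun n => Jfun βp βm (φseq n)) atTop := by
  have hcube : MeasurableSet cube3 :=
    measurableSet_Icc.prod (measurableSet_Icc.prod measurableSet_Icc)
  have : IsFiniteMeasure (volume.restrict cube3) := isFiniteMeasure_restrict.2
    (isCompact_Icc.prod (isCompact_Icc.prod isCompact_Icc)).measure_lt_top.ne
  have hW0 : ∀ ψ, MemW0 ψ → ∀ᵐ p ∂volume.restrict cube3, ψ p ∈ Icc 0 1 :=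
    fun ψ hψ => ae_restrict_of_forall_mem hcube hψ.2
  exact integral_hellingerIntegrand_le_liminf hβp_meas hβm_meas (ae_of_all _ hβp_nonneg)
    (ae_of_all _ hβm_nonneg) hβp_int hβm_int (fun n => ⟨(hφseq n).1, hW0 _ (hφseq n)⟩) hφ.1
    (hW0 φ hφ) hweak
end
end

section
/- Let β⁺,β⁻ ∈ L¹([0,1]³) be nonnegative and φ ∈ W₀. Then J^{(β⁺,β⁻)}(φ) = sup over ε ∈ (0,1) of the supremum over measurable functions g:[0,1]³→[ε,1/ε] of ∫_{[0,1]³} [ (1−g)β⁺(1−φ) + (1−1/g)β⁻φ ]. -/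
open MeasureTheory Filter Set
open scoped ENNReal

noncomputable section

lemma cube3_measurableSet : MeasurableSet cube3 :=
  measurableSet_Icc.prod (measurableSet_Icc.prod measurableSet_Icc)

/-- Pointwise upper bound: for any `g > 0`. -/
lemma ptwise_upper (A B g : ℝ) (hA : 0 ≤ A) (hB : 0 ≤ B) (hg : 0 < g) :
    (1 - g) * A + (1 - 1/g) * B ≤ (Real.sqrt A - Real.sqrt B) ^ 2 := by
  set sa := Real.sqrt A with hsa
  set sb := Real.sqrt B with hsb
  have hsa2 : sa ^ 2 = A := Real.sq_sqrt hA
  have hsb2 : sb ^ 2 = B := Real.sq_sqrt hB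
  have hexp : (sa - sb) ^ 2 = A + B - 2 * (sa * sb) := by rw [← hsa2, ← hsb2]; ring
  have key : (1 - g) * A + (1 - 1/g) * B = A + B - (g * A + (1/g) * B) := by ring
  have h4 : 0 ≤ (1/g) * (g * sa - sb) ^ 2 := by positivity
  have h5 : (1/g) * (g * sa - sb) ^ 2 = g * sa ^ 2 - 2 * (sa * sb) + (1/g) * sb ^ 2 := by
    field_simp
    ring
  rw [h5] at h4
  rw [key, hexp, hsa2, hsb2] at *
  linarith

/-- Pointwise lower bound with the near-optimal `g`. -/
lemma ptwise_lower (ε A B : ℝ) (hε0 : 0 < ε) (hε1 : ε < 1) (hA : 0 ≤ A) (hB : 0 ≤ B) :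
    (Real.sqrt A - Real.sqrt B) ^ 2 - 2 * ε * (A + B) ≤
      (1 - (if A = 0 then 1/ε else min (1/ε) (max ε (Real.sqrt B / Real.sqrt A)))) * A +
      (1 - 1 / (if A = 0 then 1/ε else min (1/ε) (max ε (Real.sqrt B / Real.sqrt A)))) * B := by
  have hεinv : 1 ≤ 1/ε := one_le_one_div hε0 hε1.le
  have hεε : ε ≤ 1/ε := le_trans hε1.le hεinv
  by_cases hA0 : A = 0
  · rw [if_pos hA0, hA0, one_div_one_div]
    rw [hA0] at *
    have : Real.sqrt 0 = 0 := Real.sqrt_zero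
    rw [this]
    have h2 : Real.sqrt B ^ 2 = B := Real.sq_sqrt hB
    have hb : 0 ≤ ε * B := mul_nonneg hε0.le hB
    nlinarith
  · rw [if_neg hA0]
    have hApos : 0 < A := lt_of_le_of_ne hA (Ne.symm hA0)
    set sa := Real.sqrt A with hsa
    set sb := Real.sqrt B with hsb
    have hsapos : 0 < sa := Real.sqrt_pos.2 hApos
    have hsb0 : 0 ≤ sb := Real.sqrt_nonneg B
    have hsa2 : sa ^ 2 = A := Real.sq_sqrt hA
    have hsb2 : sb ^ 2 = B := Real.sq_sqrt hB
    have hexp : (sa - sb) ^ 2 = A + B - 2 * (sa * sb) := by rw [← hsa2, ← hsb2]; ring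
    set r := sb / sa with hr
    have hr0 : 0 ≤ r := div_nonneg hsb0 hsapos.le
    rcases le_total r ε with h | h
    · rw [max_eq_left h, min_eq_right hεε]
      have hble : sb ≤ ε * sa := by
        rw [hr, div_le_iff₀ hsapos] at h; linarith
      have hB_le : B ≤ ε^2 * A := by nlinarith
      have h5 : (1/ε) * B ≤ ε * A := by
        have := mul_le_mul_of_nonneg_left hB_le (le_of_lt (one_div_pos.2 hε0))
        have he : (1/ε) * (ε^2 * A) = ε * A := by field_simp; try ring
        linarith [he ▸ this]
      have hab : 0 ≤ sa * sb := mul_nonneg hsapos.le hsb0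
      have h6 : 0 ≤ ε * A := mul_nonneg hε0.le hA
      have h7 : 0 ≤ ε * B := mul_nonneg hε0.le hB
      rw [hexp] at *
      nlinarith
    · rcases le_total r (1/ε) with h2 | h2
      · rw [max_eq_right h, min_eq_right h2]
        have hrpos : 0 < r := lt_of_lt_of_le hε0 h
        have hsbpos : 0 < sb := by
          rcases lt_or_ge 0 sb with h' | h'
          · exact h'
          · exfalso; have : sb = 0 := le_antisymm h' hsb0
            rw [hr, this] at hrpos; simp at hrpos
        have key1 : r * A = sa * sb := by
          rw [hr, ← hsa2]; field_simp; try ring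
        have key2 : (1/r) * B = sa * sb := by
          rw [hr, ← hsb2]; field_simp; try ring
        have e1 : (1 - r) * A + (1 - 1/r) * B = A + B - (r * A + (1/r) * B) := by ring
        rw [e1, key1, key2, hexp]
        nlinarith [mul_nonneg hε0.le (add_nonneg hA hB)]
      · rw [min_eq_left (le_trans h2 (le_max_right ε r)), one_div_one_div]
        have hsale : sa ≤ ε * sb := by
          rw [hr, le_div_iff₀ hsapos] at h2
          calc sa = ε * ((1/ε) * sa) := by field_simp
            _ ≤ ε * sb := by
                apply mul_le_mul_of_nonneg_left _ hε0.le
                calc (1/ε) * sa = 1/ε * sa := by ring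
                  _ ≤ sb := by nlinarith
        have hA_le : A ≤ ε^2 * B := by nlinarith
        have h5 : (1/ε) * A ≤ ε * B := by
          have := mul_le_mul_of_nonneg_left hA_le (le_of_lt (one_div_pos.2 hε0))
          have he : (1/ε) * (ε^2 * B) = ε * B := by field_simp; try ring
          linarith [he ▸ this]
        have hab : 0 ≤ sa * sb := mul_nonneg hsapos.le hsb0
        have h6 : 0 ≤ ε * A := mul_nonneg hε0.le hA
        have h7 : 0 ≤ ε * B := mul_nonneg hε0.le hB
        rw [hexp] at *
        nlinarith

/-- **Lemma (variational representation of the rate function `J`).**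
For nonnegative `β⁺, β⁻ ∈ L¹([0,1]³)` and `φ ∈ W₀`,
`J^{(β⁺,β⁻)}(φ)` equals the supremum over `ε ∈ (0,1)` and measurable
`g : [0,1]³ → [ε, 1/ε]` of `∫ [(1−g)β⁺(1−φ) + (1−1/g)β⁻φ]`. -/
theorem Jfun_eq_sup_representation
    (βp βm : ℝ × ℝ × ℝ → ℝ)
    (hβp_meas : Measurable βp) (hβm_meas : Measurable βm)
    (hβp_nonneg : ∀ p, 0 ≤ βp p) (hβm_nonneg : ∀ p, 0 ≤ βm p)
    (hβp_int : IntegrableOn βp cube3) (hβm_int : IntegrableOn βm cube3)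
    (φ : ℝ × ℝ × ℝ → ℝ) (hφ : MemW0 φ) :
    Jfun βp βm φ =
      ⨆ (ε : ℝ) (_ : ε ∈ Set.Ioo (0:ℝ) 1) (g : ℝ × ℝ × ℝ → ℝ)
        (_ : Measurable g ∧ ∀ p ∈ cube3, g p ∈ Set.Icc ε (1 / ε)),
        ∫ p in cube3,
          ((1 - g p) * (βp p * (1 - φ p)) + (1 - 1 / g p) * (βm p * φ p)) := by
  obtain ⟨hφm, hφ01⟩ := hφ
  have hcube : MeasurableSet cube3 := cube3_measurableSet
  -- abbreviations
  have ham : Measurable (fun p => βp p * (1 - φ p)) := hβp_meas.mul (measurable_const.sub hφm)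
  have hbm : Measurable (fun p => βm p * φ p) := hβm_meas.mul hφm
  have ha0 : ∀ p ∈ cube3, 0 ≤ βp p * (1 - φ p) := fun p hp =>
    mul_nonneg (hβp_nonneg p) (by linarith [(hφ01 p hp).2])
  have hb0 : ∀ p ∈ cube3, 0 ≤ βm p * φ p := fun p hp =>
    mul_nonneg (hβm_nonneg p) (hφ01 p hp).1
  have ha_le : ∀ p ∈ cube3, βp p * (1 - φ p) ≤ βp p := fun p hp => by
    nlinarith [(hφ01 p hp).1, hβp_nonneg p]
  have hb_le : ∀ p ∈ cube3, βm p * φ p ≤ βm p := fun p hp => by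
    nlinarith [(hφ01 p hp).2, hβm_nonneg p]
  -- integrability of a, b, T
  have haint : IntegrableOn (fun p => βp p * (1 - φ p)) cube3 := by
    refine hβp_int.mono' ham.aestronglyMeasurable ?_
    refine ae_restrict_of_forall_mem hcube fun p hp => ?_
    rw [Real.norm_eq_abs, abs_of_nonneg (ha0 p hp)]
    exact ha_le p hp
  have hbint : IntegrableOn (fun p => βm p * φ p) cube3 := by
    refine hβm_int.mono' hbm.aestronglyMeasurable ?_
    refine ae_restrict_of_forall_mem hcube fun p hp => ?_
    rw [Real.norm_eq_abs, abs_of_nonneg (hb0 p hp)]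
    exact hb_le p hp
  have hab_int : IntegrableOn (fun p => βp p * (1 - φ p) + βm p * φ p) cube3 :=
    haint.add hbint
  have hTmeas : Measurable (fun p =>
      (Real.sqrt (βp p * (1 - φ p)) - Real.sqrt (βm p * φ p)) ^ 2) :=
    (ham.sqrt.sub hbm.sqrt).pow_const 2
  have hTint : IntegrableOn (fun p =>
      (Real.sqrt (βp p * (1 - φ p)) - Real.sqrt (βm p * φ p)) ^ 2) cube3 := by
    refine ((hab_int).const_mul 2).mono' hTmeas.aestronglyMeasurable ?_
    refine ae_restrict_of_forall_mem hcube fun p hp => ?_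
    rw [Real.norm_eq_abs, abs_of_nonneg (sq_nonneg _)]
    have h1 : Real.sqrt (βp p * (1 - φ p)) ^ 2 = βp p * (1 - φ p) := Real.sq_sqrt (ha0 p hp)
    have h2 : Real.sqrt (βm p * φ p) ^ 2 = βm p * φ p := Real.sq_sqrt (hb0 p hp)
    nlinarith [sq_nonneg (Real.sqrt (βp p * (1 - φ p)) + Real.sqrt (βm p * φ p))]
  have hJdef : Jfun βp βm φ = ∫ p in cube3,
      (Real.sqrt (βp p * (1 - φ p)) - Real.sqrt (βm p * φ p)) ^ 2 := rfl
  have hJ0 : 0 ≤ Jfun βp βm φ := by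
    rw [hJdef]; exact setIntegral_nonneg hcube fun p _ => sq_nonneg _
  -- integrability of the integrand for admissible g
  have hFint : ∀ (ε : ℝ), ε ∈ Set.Ioo (0:ℝ) 1 → ∀ g : ℝ × ℝ × ℝ → ℝ, Measurable g →
      (∀ p ∈ cube3, g p ∈ Set.Icc ε (1/ε)) →
      IntegrableOn (fun p =>
        (1 - g p) * (βp p * (1 - φ p)) + (1 - 1 / g p) * (βm p * φ p)) cube3 := by
    intro ε hε g hgm hgr
    have hε0 := hε.1
    have hεinv : 1 ≤ 1/ε := one_le_one_div hε0 hε.2.le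
    have hFm : Measurable (fun p =>
        (1 - g p) * (βp p * (1 - φ p)) + (1 - 1 / g p) * (βm p * φ p)) :=
      ((measurable_const.sub hgm).mul ham).add
        ((measurable_const.sub (measurable_const.div hgm)).mul hbm)
    refine ((hβp_int.add hβm_int).const_mul (1/ε)).mono' hFm.aestronglyMeasurable ?_
    refine ae_restrict_of_forall_mem hcube fun p hp => ?_
    obtain ⟨hg1, hg2⟩ := hgr p hp
    have hgpos : 0 < g p := lt_of_lt_of_le hε0 hg1
    have hinv1 : 1 / g p ≤ 1/ε := one_div_le_one_div_of_le hε0 hg1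
    have hinv2 : ε ≤ 1 / g p := by
      have := one_div_le_one_div_of_le hgpos hg2
      rwa [one_div_one_div] at this
    have habs1 : |1 - g p| ≤ 1/ε := abs_le.2 ⟨by linarith, by linarith⟩
    have habs2 : |1 - 1 / g p| ≤ 1/ε := abs_le.2 ⟨by linarith, by linarith⟩
    have hεi0 : (0:ℝ) ≤ 1/ε := by positivity
    rw [Real.norm_eq_abs]
    have hbd1 : |(1 - g p) * (βp p * (1 - φ p))| ≤ (1/ε) * βp p := by
      rw [abs_mul, abs_of_nonneg (ha0 p hp)]
      exact mul_le_mul habs1 (ha_le p hp) (ha0 p hp) hεi0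
    have hbd2 : |(1 - 1 / g p) * (βm p * φ p)| ≤ (1/ε) * βm p := by
      rw [abs_mul, abs_of_nonneg (hb0 p hp)]
      exact mul_le_mul habs2 (hb_le p hp) (hb0 p hp) hεi0
    calc |(1 - g p) * (βp p * (1 - φ p)) + (1 - 1 / g p) * (βm p * φ p)|
        ≤ |(1 - g p) * (βp p * (1 - φ p))| + |(1 - 1 / g p) * (βm p * φ p)| := abs_add_le _ _
      _ ≤ (1/ε) * βp p + (1/ε) * βm p := add_le_add hbd1 hbd2
      _ = (1/ε) * (βp p + βm p) := by ring
  -- upper bound for all admissible (ε, g)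
  have hupper : ∀ ε ∈ Set.Ioo (0:ℝ) 1, ∀ g : ℝ × ℝ × ℝ → ℝ,
      (Measurable g ∧ ∀ p ∈ cube3, g p ∈ Set.Icc ε (1/ε)) →
      (∫ p in cube3,
        ((1 - g p) * (βp p * (1 - φ p)) + (1 - 1 / g p) * (βm p * φ p))) ≤ Jfun βp βm φ := by
    intro ε hε g hg
    rw [hJdef]
    refine setIntegral_mono_on (hFint ε hε g hg.1 hg.2) hTint hcube fun p hp => ?_
    exact ptwise_upper _ _ _ (ha0 p hp) (hb0 p hp) (lt_of_lt_of_le hε.1 (hg.2 p hp).1)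
  set Creal := ∫ p in cube3, (βp p * (1 - φ p) + βm p * φ p) with hCdef
  have hC0 : 0 ≤ Creal :=
    setIntegral_nonneg hcube fun p hp => add_nonneg (ha0 p hp) (hb0 p hp)
  have hbdd : BddAbove (Set.range fun ε : ℝ =>
      ⨆ (_ : ε ∈ Set.Ioo (0:ℝ) 1), ⨆ (g : ℝ × ℝ × ℝ → ℝ),
        ⨆ (_ : Measurable g ∧ ∀ p ∈ cube3, g p ∈ Set.Icc ε (1 / ε)),
        ∫ p in cube3,
          ((1 - g p) * (βp p * (1 - φ p)) + (1 - 1 / g p) * (βm p * φ p))) := by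
    refine ⟨Jfun βp βm φ, ?_⟩
    rintro x ⟨ε, rfl⟩
    exact Real.iSup_le (fun hε => Real.iSup_le (fun g => Real.iSup_le
      (fun hg => hupper ε hε g hg) hJ0) hJ0) hJ0
  -- the key lower estimate
  have hmono : ∀ ε ∈ Set.Ioo (0:ℝ) 1, Jfun βp βm φ - 2 * ε * Creal ≤
      ⨆ (ε : ℝ) (_ : ε ∈ Set.Ioo (0:ℝ) 1) (g : ℝ × ℝ × ℝ → ℝ)
        (_ : Measurable g ∧ ∀ p ∈ cube3, g p ∈ Set.Icc ε (1 / ε)),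
        ∫ p in cube3,
          ((1 - g p) * (βp p * (1 - φ p)) + (1 - 1 / g p) * (βm p * φ p)) := by
    intro ε hε
    have hεε : ε ≤ 1/ε := le_trans hε.2.le (one_le_one_div hε.1 hε.2.le)
    set g : ℝ × ℝ × ℝ → ℝ := fun p =>
      if βp p * (1 - φ p) = 0 then 1/ε
      else min (1/ε) (max ε (Real.sqrt (βm p * φ p) / Real.sqrt (βp p * (1 - φ p))))
      with hgdef
    have hgm : Measurable g := by
      rw [hgdef]
      exact Measurable.ite (ham (measurableSet_singleton 0)) measurable_const
        (measurable_const.min (measurable_const.max (hbm.sqrt.div ham.sqrt)))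
    have hgr : ∀ p ∈ cube3, g p ∈ Set.Icc ε (1/ε) := by
      intro p _
      rw [hgdef]
      dsimp only
      split_ifs with h
      · exact ⟨hεε, le_rfl⟩
      · exact ⟨le_min hεε (le_max_left _ _), min_le_left _ _⟩
    have heq : ∫ p in cube3,
        ((Real.sqrt (βp p * (1 - φ p)) - Real.sqrt (βm p * φ p)) ^ 2
          - 2 * ε * (βp p * (1 - φ p) + βm p * φ p))
        = Jfun βp βm φ - 2 * ε * Creal := by
      rw [integral_sub hTint (hab_int.const_mul (2*ε)), integral_const_mul, hJdef, hCdef]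
    have hstep : Jfun βp βm φ - 2 * ε * Creal ≤ ∫ p in cube3,
        ((1 - g p) * (βp p * (1 - φ p)) + (1 - 1 / g p) * (βm p * φ p)) := by
      rw [← heq]
      refine setIntegral_mono_on (hTint.sub (hab_int.const_mul (2*ε)))
        (hFint ε hε g hgm hgr) hcube fun p hp => ?_
      exact ptwise_lower ε _ _ hε.1 hε.2 (ha0 p hp) (hb0 p hp)
    refine hstep.trans ?_
    have h1 : (∫ p in cube3,
          ((1 - g p) * (βp p * (1 - φ p)) + (1 - 1 / g p) * (βm p * φ p)))
        ≤ ⨆ (g : ℝ × ℝ × ℝ → ℝ),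
          ⨆ (_ : Measurable g ∧ ∀ p ∈ cube3, g p ∈ Set.Icc ε (1 / ε)),
          ∫ p in cube3,
            ((1 - g p) * (βp p * (1 - φ p)) + (1 - 1 / g p) * (βm p * φ p)) := by
      have hbdd1 : BddAbove (Set.range fun g : ℝ × ℝ × ℝ → ℝ =>
          ⨆ (_ : Measurable g ∧ ∀ p ∈ cube3, g p ∈ Set.Icc ε (1 / ε)),
          ∫ p in cube3,
            ((1 - g p) * (βp p * (1 - φ p)) + (1 - 1 / g p) * (βm p * φ p))) := by
        refine ⟨Jfun βp βm φ, ?_⟩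
        rintro x ⟨g', rfl⟩
        exact Real.iSup_le (fun hg' => hupper ε hε g' hg') hJ0
      have hgprop : Measurable g ∧ ∀ p ∈ cube3, g p ∈ Set.Icc ε (1/ε) := ⟨hgm, hgr⟩
      refine le_trans (le_of_eq (ciSup_pos
        (f := fun _ : (Measurable g ∧ ∀ p ∈ cube3, g p ∈ Set.Icc ε (1/ε)) =>
          ∫ p in cube3,
            ((1 - g p) * (βp p * (1 - φ p)) + (1 - 1 / g p) * (βm p * φ p)))
        hgprop).symm) (le_ciSup hbdd1 g)
    refine h1.trans ?_
    rw [← ciSup_pos (p := ε ∈ Set.Ioo (0:ℝ) 1)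
      (f := fun _ => ⨆ (g : ℝ × ℝ × ℝ → ℝ),
        ⨆ (_ : Measurable g ∧ ∀ p ∈ cube3, g p ∈ Set.Icc ε (1 / ε)),
        ∫ p in cube3,
          ((1 - g p) * (βp p * (1 - φ p)) + (1 - 1 / g p) * (βm p * φ p))) hε]
    exact le_ciSup hbdd ε
  refine le_antisymm ?_ (Real.iSup_le (fun ε => Real.iSup_le (fun hε => Real.iSup_le
    (fun g => Real.iSup_le (fun hg => hupper ε hε g hg) hJ0) hJ0) hJ0) hJ0)
  refine le_of_forall_pos_le_add fun η hη => ?_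
  have hden : (0:ℝ) < 2 * Creal + 1 := by linarith
  set ε₀ := min (1/2 : ℝ) (η / (2 * Creal + 1)) with hε₀def
  have hε₀0 : 0 < ε₀ := lt_min (by norm_num) (div_pos hη hden)
  have hε₀1 : ε₀ < 1 := lt_of_le_of_lt (min_le_left _ _) (by norm_num)
  have hkey := hmono ε₀ ⟨hε₀0, hε₀1⟩
  have h2C : 2 * ε₀ * Creal ≤ η := by
    have h1 : ε₀ ≤ η / (2 * Creal + 1) := min_le_right _ _
    have h2 : 2 * ε₀ * Creal ≤ 2 * (η / (2 * Creal + 1)) * Creal := by nlinarith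
    have h3 : 2 * (η / (2 * Creal + 1)) * Creal = η * (2 * Creal / (2 * Creal + 1)) := by
      ring
    have h4 : 2 * Creal / (2 * Creal + 1) ≤ 1 := (div_le_one hden).2 (by linarith)
    nlinarith [hη.le]
  linarith
end
end

section
/- Let γ⁺,γ⁻:[0,1]²→[0,∞) be measurable with γ⁺,γ⁻ ∈ L¹([0,1]²), and let f ∈ S₀. Define Γ(f) := { φ ∈ W₀ : ∫₀¹ φ(x,y,s) ds = f(x,y) for a.e. (x,y) }. Then inf over φ ∈ Γ(f) of ∫_{[0,1]³} ( √(γ⁺(x,y)(1−φ(x,y,s))) − √(γ⁻(x,y)φ(x,y,s)) )² dx dy ds equals ∫_{[0,1]²} ( √(γ⁺(x,y)(1−f(x,y))) − √(γ⁻(x,y)f(x,y)) )² dx dy, and the infimum is attained at the time-constant process φ(x,y,s) := f(x,y). -/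
open MeasureTheory Filter Set
open scoped ENNReal

noncomputable section

/-- The unit square `[0,1]²`. -/
def sq2 : Set (ℝ × ℝ) := I01 ×ˢ I01

/-- The time-homogeneous rate integrand, integrated over `[0,1]³`:
`∫ (√(γ⁺(x,y)(1−φ(x,y,s))) − √(γ⁻(x,y)φ(x,y,s)))² dx dy ds`. -/
def Jhom (γp γm : ℝ × ℝ → ℝ) (φ : ℝ × ℝ × ℝ → ℝ) : ℝ :=
  ∫ p in cube3,
    (Real.sqrt (γp (p.1, p.2.1) * (1 - φ p)) - Real.sqrt (γm (p.1, p.2.1) * φ p)) ^ 2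

/-!
Write `rateFn a b t = (√(a(1-t)) - √(bt))² = a + (b-a)t - 2√(ab)·√(t(1-t))`; since `√(t(1-t))` is
concave, `rateFn a b` is convex on `[0,1]`. By Fubini the rate of `φ` is the integral over `(x,y)`
of the time average of `rateFn (γ⁺ (x,y)) (γ⁻ (x,y))` along the slice `φ(x,y,·)`, which by Jensen
dominates its value at the time average `f(x,y)`. The time-constant process turns this into an
equality.
-/

def rateFn (a b t : ℝ) : ℝ := (Real.sqrt (a * (1 - t)) - Real.sqrt (b * t)) ^ 2

section Pointwise

variable {a b t : ℝ}

lemma rateFn_nonneg : 0 ≤ rateFn a b t := sq_nonneg _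

lemma continuous_rateFn : Continuous (fun p : ℝ × ℝ × ℝ => rateFn p.1 p.2.1 p.2.2) := by
  unfold rateFn; fun_prop

lemma rateFn_eq_affine_sub_sqrt (ha : 0 ≤ a) (hb : 0 ≤ b) (ht : t ∈ Icc (0:ℝ) 1) :
    rateFn a b t = a + (b - a) * t - 2 * Real.sqrt (a * b) * Real.sqrt (t * (1 - t)) := by
  have h1 : Real.sqrt (a * (1 - t)) ^ 2 = a * (1 - t) :=
    Real.sq_sqrt (mul_nonneg ha (by linarith [ht.2]))
  have h2 : Real.sqrt (b * t) ^ 2 = b * t := Real.sq_sqrt (mul_nonneg hb ht.1)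
  have h3 : Real.sqrt (a * (1 - t)) * Real.sqrt (b * t)
      = Real.sqrt (a * b) * Real.sqrt (t * (1 - t)) := by
    rw [← Real.sqrt_mul (mul_nonneg ha (by linarith [ht.2])), ← Real.sqrt_mul (mul_nonneg ha hb)]
    ring_nf
  unfold rateFn
  linear_combination h1 + h2 - 2 * h3

lemma rateFn_le_add (ha : 0 ≤ a) (hb : 0 ≤ b) (ht : t ∈ Icc (0:ℝ) 1) : rateFn a b t ≤ a + b := by
  rw [rateFn_eq_affine_sub_sqrt ha hb ht]
  nlinarith [mul_nonneg (Real.sqrt_nonneg (a * b)) (Real.sqrt_nonneg (t * (1 - t))),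
    mul_nonneg ha ht.1, mul_nonneg hb (sub_nonneg.2 ht.2)]

end Pointwise

lemma concaveOn_mul_one_sub : ConcaveOn ℝ (Icc (0:ℝ) 1) (fun t => t * (1 - t)) := by
  refine ⟨convex_Icc 0 1, fun x _ y _ c d hc hd hcd => ?_⟩
  obtain rfl : d = 1 - c := by linarith
  simp only [smul_eq_mul]
  nlinarith [mul_nonneg (mul_nonneg hc hd) (sq_nonneg (x - y))]

lemma concaveOn_sqrt_mul_one_sub :
    ConcaveOn ℝ (Icc (0:ℝ) 1) (fun t => Real.sqrt (t * (1 - t))) := by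
  refine ⟨convex_Icc 0 1, fun x hx y hy c d hc hd hcd => ?_⟩
  have hx0 : 0 ≤ x * (1 - x) := mul_nonneg hx.1 (by linarith [hx.2])
  have hy0 : 0 ≤ y * (1 - y) := mul_nonneg hy.1 (by linarith [hy.2])
  calc c • Real.sqrt (x * (1 - x)) + d • Real.sqrt (y * (1 - y))
      ≤ Real.sqrt (c • (x * (1 - x)) + d • (y * (1 - y))) :=
        Real.strictConcaveOn_sqrt.concaveOn.2 hx0 hy0 hc hd hcd
    _ ≤ Real.sqrt ((c • x + d • y) * (1 - (c • x + d • y))) :=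
        Real.sqrt_le_sqrt (concaveOn_mul_one_sub.2 hx hy hc hd hcd)

lemma convexOn_rateFn {a b : ℝ} (ha : 0 ≤ a) (hb : 0 ≤ b) :
    ConvexOn ℝ (Icc (0:ℝ) 1) (rateFn a b) := by
  have hlin : ConvexOn ℝ (Icc (0:ℝ) 1) (fun t => a + (b - a) * t) :=
    (convexOn_const a (convex_Icc 0 1)).add
      ((LinearMap.mul ℝ ℝ (b - a)).convexOn (convex_Icc 0 1))
  have hsqrt := concaveOn_sqrt_mul_one_sub.smul (by positivity : 0 ≤ 2 * Real.sqrt (a * b))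
  exact (hlin.sub hsqrt).congr fun t ht => (rateFn_eq_affine_sub_sqrt ha hb ht).symm

lemma integrable_rateFn_comp {α : Type*} [MeasurableSpace α] {μ : Measure α} {a b ψ : α → ℝ}
    (ha : Integrable a μ) (hb : Integrable b μ) (ha0 : ∀ x, 0 ≤ a x) (hb0 : ∀ x, 0 ≤ b x)
    (hψ : Measurable ψ) (hψ01 : ∀ᵐ x ∂μ, ψ x ∈ Icc (0:ℝ) 1) :
    Integrable (fun x => rateFn (a x) (b x) (ψ x)) μ := by
  refine (ha.add hb).mono' ?_ ?_
  · exact (continuous_rateFn.measurable.comp_aemeasurable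
      (ha.aemeasurable.prodMk (hb.aemeasurable.prodMk hψ.aemeasurable))).aestronglyMeasurable
  · filter_upwards [hψ01] with x hx
    rw [Real.norm_of_nonneg rateFn_nonneg]
    exact rateFn_le_add (ha0 x) (hb0 x) hx

lemma rateFn_integral_le_integral {α : Type*} [MeasurableSpace α] {μ : Measure α}
    [IsProbabilityMeasure μ] {a b : ℝ} (ha : 0 ≤ a) (hb : 0 ≤ b) {ψ : α → ℝ} (hψ : Measurable ψ)
    (hψ01 : ∀ᵐ x ∂μ, ψ x ∈ Icc (0:ℝ) 1) :
    rateFn a b (∫ x, ψ x ∂μ) ≤ ∫ x, rateFn a b (ψ x) ∂μ := by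
  have hψi : Integrable ψ μ := by
    refine .of_bound hψ.aestronglyMeasurable 1 ?_
    filter_upwards [hψ01] with x hx
    rw [Real.norm_of_nonneg hx.1]
    exact hx.2
  exact (convexOn_rateFn ha hb).map_integral_le
    (continuous_rateFn.comp (by fun_prop : Continuous fun t : ℝ => (a, b, t))).continuousOn
    isClosed_Icc hψ01 hψi
    (integrable_rateFn_comp (integrable_const a) (integrable_const b) (fun _ => ha) (fun _ => hb)
      hψ hψ01)

lemma measurableSet_I01 : MeasurableSet I01 := measurableSet_Icc

lemma measurableSet_sq2 : MeasurableSet sq2 := measurableSet_I01.prod measurableSet_I01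

instance isProbabilityMeasure_restrict_I01 : IsProbabilityMeasure (volume.restrict I01) :=
  ⟨by simp [I01]⟩

lemma measurePreserving_prodAssoc_sq2_I01 :
    MeasurePreserving (MeasurableEquiv.prodAssoc : (ℝ × ℝ) × ℝ ≃ᵐ ℝ × ℝ × ℝ)
      ((volume.restrict sq2).prod (volume.restrict I01)) (volume.restrict cube3) := by
  have h := volume_preserving_prodAssoc.restrict_preimage_emb
    (MeasurableEquiv.prodAssoc : (ℝ × ℝ) × ℝ ≃ᵐ ℝ × ℝ × ℝ).measurableEmbedding cube3
  have hpre : (MeasurableEquiv.prodAssoc : (ℝ × ℝ) × ℝ ≃ᵐ ℝ × ℝ × ℝ) ⁻¹' cube3 = sq2 ×ˢ I01 := by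
    ext ⟨⟨x, y⟩, s⟩
    simp [cube3, sq2, MeasurableEquiv.prodAssoc, Equiv.prodAssoc, and_assoc]
  rwa [hpre, Measure.volume_eq_prod, ← Measure.prod_restrict] at h

section Rate

variable {γp γm : ℝ × ℝ → ℝ} {φ : ℝ × ℝ × ℝ → ℝ}

lemma integrable_rateFn_prod (hγp : IntegrableOn γp sq2) (hγm : IntegrableOn γm sq2)
    (hγp0 : ∀ q, 0 ≤ γp q) (hγm0 : ∀ q, 0 ≤ γm q) (hφ : MemW0 φ) :
    Integrable (fun r : (ℝ × ℝ) × ℝ => rateFn (γp r.1) (γm r.1) (φ (r.1.1, r.1.2, r.2)))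
      ((volume.restrict sq2).prod (volume.restrict I01)) := by
  have hφ01 : ∀ᵐ p ∂(volume.restrict cube3), φ p ∈ Icc (0:ℝ) 1 :=
    (ae_restrict_mem (measurableSet_I01.prod (measurableSet_I01.prod measurableSet_I01))).mono
      hφ.2
  exact integrable_rateFn_comp (hγp.comp_fst _) (hγm.comp_fst _) (fun r => hγp0 r.1)
    (fun r => hγm0 r.1) (hφ.1.comp MeasurableEquiv.prodAssoc.measurable)
    (measurePreserving_prodAssoc_sq2_I01.quasiMeasurePreserving.ae hφ01)

lemma Jhom_eq_integral_integral (hγp : IntegrableOn γp sq2) (hγm : IntegrableOn γm sq2)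
    (hγp0 : ∀ q, 0 ≤ γp q) (hγm0 : ∀ q, 0 ≤ γm q) (hφ : MemW0 φ) :
    Jhom γp γm φ = ∫ q in sq2, ∫ s in I01, rateFn (γp q) (γm q) (φ (q.1, q.2, s)) := by
  rw [← integral_prod _ (integrable_rateFn_prod hγp hγm hγp0 hγm0 hφ)]
  exact (measurePreserving_prodAssoc_sq2_I01.integral_comp'
    (fun p => rateFn (γp (p.1, p.2.1)) (γm (p.1, p.2.1)) (φ p))).symm

lemma integral_rateFn_le_Jhom (hγp : IntegrableOn γp sq2) (hγm : IntegrableOn γm sq2)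
    (hγp0 : ∀ q, 0 ≤ γp q) (hγm0 : ∀ q, 0 ≤ γm q) (hφ : MemW0 φ) {f : ℝ × ℝ → ℝ}
    (hφf : ∀ᵐ q ∂(volume.restrict sq2), (∫ s in I01, φ (q.1, q.2, s)) = f q) :
    ∫ q in sq2, rateFn (γp q) (γm q) (f q) ≤ Jhom γp γm φ := by
  rw [Jhom_eq_integral_integral hγp hγm hγp0 hγm0 hφ]
  refine integral_mono_of_nonneg (ae_of_all _ fun _ => rateFn_nonneg)
    (integrable_rateFn_prod hγp hγm hγp0 hγm0 hφ).integral_prod_left ?_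
  filter_upwards [hφf, ae_restrict_mem measurableSet_sq2] with q hq hqsq
  rw [← hq]
  refine rateFn_integral_le_integral (hγp0 q) (hγm0 q) (hφ.1.comp (by fun_prop)) ?_
  filter_upwards [ae_restrict_mem measurableSet_I01] with s hs
  exact hφ.2 _ ⟨hqsq.1, hqsq.2, hs⟩

end Rate

theorem homogeneous_rate_inf_general
    (γp γm : ℝ × ℝ → ℝ)
    (hγp_nonneg : ∀ q, 0 ≤ γp q) (hγm_nonneg : ∀ q, 0 ≤ γm q)
    (hγp_int : IntegrableOn γp sq2) (hγm_int : IntegrableOn γm sq2)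
    (f : ℝ × ℝ → ℝ) (hf_meas : Measurable f)
    (hf_01 : ∀ q ∈ sq2, f q ∈ Set.Icc (0:ℝ) 1) :
    sInf {r : ℝ | ∃ φ : ℝ × ℝ × ℝ → ℝ, MemW0 φ ∧
        (∀ᵐ q ∂(volume.restrict sq2), (∫ s in I01, φ (q.1, q.2, s)) = f q) ∧
        r = Jhom γp γm φ}
      = ∫ q in sq2, (Real.sqrt (γp q * (1 - f q)) - Real.sqrt (γm q * f q)) ^ 2
    ∧ MemW0 (fun p => f (p.1, p.2.1))
    ∧ (∀ᵐ q ∂(volume.restrict sq2), (∫ s in I01, f (q.1, q.2)) = f q)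
    ∧ Jhom γp γm (fun p => f (p.1, p.2.1))
        = ∫ q in sq2, (Real.sqrt (γp q * (1 - f q)) - Real.sqrt (γm q * f q)) ^ 2 := by
  have hconst : MemW0 (fun p => f (p.1, p.2.1)) :=
    ⟨hf_meas.comp (by fun_prop), fun p hp => hf_01 _ ⟨hp.1, hp.2.1⟩⟩
  have hmarg : ∀ᵐ q ∂(volume.restrict sq2), (∫ s in I01, f (q.1, q.2)) = f q :=
    ae_of_all _ fun q => by simp
  have hJ : Jhom γp γm (fun p => f (p.1, p.2.1)) = ∫ q in sq2, rateFn (γp q) (γm q) (f q) := by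
    simp [Jhom_eq_integral_integral hγp_int hγm_int hγp_nonneg hγm_nonneg hconst]
  refine ⟨IsLeast.csInf_eq ⟨⟨_, hconst, hmarg, hJ.symm⟩, ?_⟩, hconst, hmarg, hJ⟩
  rintro _ ⟨φ, hφ, hφf, rfl⟩
  exact integral_rateFn_le_Jhom hγp_int hγm_int hγp_nonneg hγm_nonneg hφ hφf

/-- **Corollary (time-homogeneous rate function).**
For nonnegative `γ⁺, γ⁻ ∈ L¹([0,1]²)` and `f ∈ S₀`, the infimum of the rate over
`Γ(f) = {φ ∈ W₀ : ∫₀¹ φ(·,·,s) ds = f a.e.}` equals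
`∫ (√(γ⁺(1−f)) − √(γ⁻f))²`, and it is attained at the time-constant process `φ ≡ f`. -/
theorem homogeneous_rate_inf
    (γp γm : ℝ × ℝ → ℝ)
    (hγp_meas : Measurable γp) (hγm_meas : Measurable γm)
    (hγp_nonneg : ∀ q, 0 ≤ γp q) (hγm_nonneg : ∀ q, 0 ≤ γm q)
    (hγp_int : IntegrableOn γp sq2) (hγm_int : IntegrableOn γm sq2)
    (f : ℝ × ℝ → ℝ) (hf_meas : Measurable f)
    (hf_01 : ∀ q ∈ sq2, f q ∈ Set.Icc (0:ℝ) 1) :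
    sInf {r : ℝ | ∃ φ : ℝ × ℝ × ℝ → ℝ, MemW0 φ ∧
        (∀ᵐ q ∂(volume.restrict sq2), (∫ s in I01, φ (q.1, q.2, s)) = f q) ∧
        r = Jhom γp γm φ}
      = ∫ q in sq2, (Real.sqrt (γp q * (1 - f q)) - Real.sqrt (γm q * f q)) ^ 2
    ∧ MemW0 (fun p => f (p.1, p.2.1))
    ∧ (∀ᵐ q ∂(volume.restrict sq2), (∫ s in I01, f (q.1, q.2)) = f q)
    ∧ Jhom γp γm (fun p => f (p.1, p.2.1))
        = ∫ q in sq2, (Real.sqrt (γp q * (1 - f q)) - Real.sqrt (γm q * f q)) ^ 2 :=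
  homogeneous_rate_inf_general γp γm hγp_nonneg hγm_nonneg hγp_int hγm_int f hf_meas hf_01
end
end

section
/- For every h ∈ [0,1] and b⁺, b⁻ ∈ (0,∞), the infimum of ℓ(a⁺)·b⁺(1−h) + ℓ(a⁻)·b⁻h over all pairs (a⁺,a⁻) ∈ [0,∞)² satisfying a⁺·b⁺(1−h) = a⁻·b⁻h equals ( √(b⁺(1−h)) − √(b⁻h) )², where ℓ(x) := x log x − x + 1 (with ℓ(0)=1). Moreover this infimum is attained: for h∈{0,1} it is attained at (a⁺,a⁻)=(0,0), and for h∈(0,1) at (a⁺,a⁻) = ( √(hb⁻/((1−h)b⁺)), √((1−h)b⁺/(hb⁻)) ). -/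
noncomputable section

/-- `ℓ(x) = x log x − x + 1` (so that `ℓ(0) = 1`, since `Real.log 0 = 0`). -/
def ell (x : ℝ) : ℝ := x * Real.log x - x + 1

lemma ell_nonneg {x : ℝ} (hx : 0 ≤ x) : 0 ≤ ell x := by
  rcases hx.eq_or_lt with rfl | hx
  · simp [ell]
  · have h1 : Real.log x⁻¹ ≤ x⁻¹ - 1 := Real.log_le_sub_one_of_pos (by positivity)
    rw [Real.log_inv] at h1
    unfold ell
    nlinarith [mul_le_mul_of_nonneg_left h1 hx.le, mul_inv_cancel₀ hx.ne']

lemma key_lb (B C ap am : ℝ) (hB : 0 ≤ B) (hC : 0 ≤ C) (hap : 0 ≤ ap) (ham : 0 ≤ am)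
    (hcon : ap * B = am * C) :
    (Real.sqrt B - Real.sqrt C) ^ 2 ≤ ell ap * B + ell am * C := by
  have hsB : Real.sqrt B ^ 2 = B := Real.sq_sqrt hB
  have hsC : Real.sqrt C ^ 2 = C := Real.sq_sqrt hC
  rcases (mul_nonneg hap hB).eq_or_lt with ht0 | ht0
  · have ht0' : am * C = 0 := hcon ▸ ht0.symm
    have e1 : ell ap * B = B := by
      rcases mul_eq_zero.mp ht0.symm with h | h
      · subst h; simp [ell]
      · simp [h]
    have e2 : ell am * C = C := by
      rcases mul_eq_zero.mp ht0' with h | h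
      · subst h; simp [ell]
      · simp [h]
    nlinarith [mul_nonneg (Real.sqrt_nonneg B) (Real.sqrt_nonneg C)]
  · have hapos : 0 < ap := by
      rcases mul_pos_iff.mp ht0 with h' | h'
      · exact h'.1
      · linarith [h'.1]
    have hBpos : 0 < B := by
      rcases mul_pos_iff.mp ht0 with h' | h'
      · exact h'.2
      · linarith [h'.2]
    have ht0' : 0 < am * C := hcon ▸ ht0
    have hampos : 0 < am := by
      rcases mul_pos_iff.mp ht0' with h' | h'
      · exact h'.1
      · linarith [h'.1]
    have hCpos : 0 < C := by
      rcases mul_pos_iff.mp ht0' with h' | h'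
      · exact h'.2
      · linarith [h'.2]
    set t := ap * B with htdef
    set s := Real.sqrt B * Real.sqrt C with hsdef
    have hsBpos : 0 < Real.sqrt B := Real.sqrt_pos.mpr hBpos
    have hsCpos : 0 < Real.sqrt C := Real.sqrt_pos.mpr hCpos
    have hspos : 0 < s := mul_pos hsBpos hsCpos
    have hlogs : Real.log s = (Real.log B + Real.log C) / 2 := by
      rw [hsdef, Real.log_mul hsBpos.ne' hsCpos.ne', Real.log_sqrt hB, Real.log_sqrt hC]
      ring
    have hlogt1 : Real.log t = Real.log ap + Real.log B := by
      rw [htdef, Real.log_mul hapos.ne' hBpos.ne']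
    have hlogt2 : Real.log t = Real.log am + Real.log C := by
      rw [hcon, Real.log_mul hampos.ne' hCpos.ne']
    have htpos : 0 < t := ht0
    have hell := ell_nonneg (x := t / s) (by positivity)
    have hld : Real.log (t / s) = Real.log t - Real.log s :=
      Real.log_div htpos.ne' hspos.ne'
    have hkey : 0 ≤ t * Real.log t - t * Real.log s - t + s := by
      unfold ell at hell
      rw [hld] at hell
      have h' := mul_nonneg hspos.le hell
      have hts : s * (t / s) = t := by field_simp
      nlinarith [h', hts]
    have e1 : ap * Real.log ap * B = t * Real.log t - t * Real.log B := by
      have hlap : Real.log ap = Real.log t - Real.log B := by linarith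
      rw [hlap, show ap * (Real.log t - Real.log B) * B = (ap * B) * (Real.log t - Real.log B) from by ring, ← htdef]
      ring
    have e2 : am * Real.log am * C = t * Real.log t - t * Real.log C := by
      have hlam : Real.log am = Real.log t - Real.log C := by linarith
      rw [hlam, show am * (Real.log t - Real.log C) * C = (am * C) * (Real.log t - Real.log C) from by ring, ← hcon]
      ring
    have e3 : am * C = t := hcon.symm
    have hexp : (Real.sqrt B - Real.sqrt C) ^ 2 = B + C - 2 * s := by
      rw [sub_sq, hsB, hsC, hsdef]
      ring
    unfold ell
    nlinarith [e1, e2, e3, hkey, hexp, hlogs, htdef]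
/-- **Lemma (explicit pointwise variational problem).**
For `h ∈ [0,1]` and `b⁺, b⁻ > 0`, the least value of
`ℓ(a⁺)·b⁺(1−h) + ℓ(a⁻)·b⁻h` over `a⁺, a⁻ ≥ 0` with `a⁺b⁺(1−h) = a⁻b⁻h` is
`(√(b⁺(1−h)) − √(b⁻h))²`; it is attained at `(0,0)` when `h ∈ {0,1}`, and at
`(√(hb⁻/((1−h)b⁺)), √((1−h)b⁺/(hb⁻)))` when `h ∈ (0,1)`. -/
theorem pointwise_rate_minimization
    (h bp bm : ℝ) (hh : h ∈ Set.Icc (0:ℝ) 1) (hbp : 0 < bp) (hbm : 0 < bm) :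
    IsLeast
      {r : ℝ | ∃ ap am : ℝ, 0 ≤ ap ∧ 0 ≤ am ∧ ap * (bp * (1 - h)) = am * (bm * h) ∧
        r = ell ap * (bp * (1 - h)) + ell am * (bm * h)}
      ((Real.sqrt (bp * (1 - h)) - Real.sqrt (bm * h)) ^ 2)
    ∧ ((h = 0 ∨ h = 1) →
        (0 : ℝ) * (bp * (1 - h)) = (0 : ℝ) * (bm * h) ∧
        ell 0 * (bp * (1 - h)) + ell 0 * (bm * h)
          = (Real.sqrt (bp * (1 - h)) - Real.sqrt (bm * h)) ^ 2)
    ∧ (h ∈ Set.Ioo (0:ℝ) 1 →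
        Real.sqrt (h * bm / ((1 - h) * bp)) * (bp * (1 - h))
            = Real.sqrt ((1 - h) * bp / (h * bm)) * (bm * h) ∧
        ell (Real.sqrt (h * bm / ((1 - h) * bp))) * (bp * (1 - h))
            + ell (Real.sqrt ((1 - h) * bp / (h * bm))) * (bm * h)
          = (Real.sqrt (bp * (1 - h)) - Real.sqrt (bm * h)) ^ 2) := by
  obtain ⟨hh0, hh1⟩ := hh
  have hB : 0 ≤ bp * (1 - h) := mul_nonneg hbp.le (by linarith)
  have hC : 0 ≤ bm * h := mul_nonneg hbm.le hh0
  -- Part 2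
  have part2 : (h = 0 ∨ h = 1) →
      (0 : ℝ) * (bp * (1 - h)) = (0 : ℝ) * (bm * h) ∧
      ell 0 * (bp * (1 - h)) + ell 0 * (bm * h)
        = (Real.sqrt (bp * (1 - h)) - Real.sqrt (bm * h)) ^ 2 := by
    rintro (rfl | rfl)
    · refine ⟨by ring, ?_⟩
      have h1 : ell 0 = 1 := by simp [ell]
      rw [h1]
      norm_num
      linarith [Real.sq_sqrt hbp.le]
    · refine ⟨by ring, ?_⟩
      have h1 : ell 0 = 1 := by simp [ell]
      rw [h1]
      norm_num
      linarith [Real.sq_sqrt hbm.le]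
  -- Part 3
  have part3 : h ∈ Set.Ioo (0:ℝ) 1 →
      Real.sqrt (h * bm / ((1 - h) * bp)) * (bp * (1 - h))
          = Real.sqrt ((1 - h) * bp / (h * bm)) * (bm * h) ∧
      ell (Real.sqrt (h * bm / ((1 - h) * bp))) * (bp * (1 - h))
          + ell (Real.sqrt ((1 - h) * bp / (h * bm))) * (bm * h)
        = (Real.sqrt (bp * (1 - h)) - Real.sqrt (bm * h)) ^ 2 := by
    rintro ⟨hl, hr⟩
    have hBpos : 0 < bp * (1 - h) := mul_pos hbp (by linarith)
    have hCpos : 0 < bm * h := mul_pos hbm hl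
    set sB := Real.sqrt (bp * (1 - h)) with hsBdef
    set sC := Real.sqrt (bm * h) with hsCdef
    have hsBpos : 0 < sB := Real.sqrt_pos.mpr hBpos
    have hsCpos : 0 < sC := Real.sqrt_pos.mpr hCpos
    have m1 : sB * sB = bp * (1 - h) := Real.mul_self_sqrt hB
    have m2 : sC * sC = bm * h := Real.mul_self_sqrt hC
    have e1 : Real.sqrt (h * bm / ((1 - h) * bp)) = sC / sB := by
      rw [show h * bm / ((1 - h) * bp) = (bm * h) / (bp * (1 - h)) from by ring,
        Real.sqrt_div hC]
    have e2 : Real.sqrt ((1 - h) * bp / (h * bm)) = sB / sC := by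
      rw [show (1 - h) * bp / (h * bm) = (bp * (1 - h)) / (bm * h) from by ring,
        Real.sqrt_div hB]
    have capB : Real.sqrt (h * bm / ((1 - h) * bp)) * (bp * (1 - h)) = sC * sB := by
      rw [e1, ← m1]
      field_simp
    have camC : Real.sqrt ((1 - h) * bp / (h * bm)) * (bm * h) = sC * sB := by
      rw [e2, ← m2]
      field_simp
    refine ⟨by rw [capB, camC], ?_⟩
    have hlap : Real.log (Real.sqrt (h * bm / ((1 - h) * bp)))
        = (Real.log (bm * h) - Real.log (bp * (1 - h))) / 2 := by
      rw [e1, Real.log_div hsCpos.ne' hsBpos.ne', hsBdef, hsCdef,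
        Real.log_sqrt hC, Real.log_sqrt hB]
      ring
    have hlam : Real.log (Real.sqrt ((1 - h) * bp / (h * bm)))
        = (Real.log (bp * (1 - h)) - Real.log (bm * h)) / 2 := by
      rw [e2, Real.log_div hsBpos.ne' hsCpos.ne', hsBdef, hsCdef,
        Real.log_sqrt hC, Real.log_sqrt hB]
      ring
    have key1 : ell (Real.sqrt (h * bm / ((1 - h) * bp))) * (bp * (1 - h))
        = sC * sB * ((Real.log (bm * h) - Real.log (bp * (1 - h))) / 2)
          - sC * sB + bp * (1 - h) := by
      unfold ell
      rw [hlap]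
      linear_combination ((Real.log (bm * h) - Real.log (bp * (1 - h))) / 2 - 1) * capB
    have key2 : ell (Real.sqrt ((1 - h) * bp / (h * bm))) * (bm * h)
        = sC * sB * ((Real.log (bp * (1 - h)) - Real.log (bm * h)) / 2)
          - sC * sB + bm * h := by
      unfold ell
      rw [hlam]
      linear_combination ((Real.log (bp * (1 - h)) - Real.log (bm * h)) / 2 - 1) * camC
    linear_combination key1 + key2 - m1 - m2
  refine ⟨⟨?_, ?_⟩, part2, part3⟩
  · -- membership
    by_cases h0 : h = 0
    · obtain ⟨hc, hv⟩ := part2 (Or.inl h0)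
      exact ⟨0, 0, le_refl 0, le_refl 0, hc, hv.symm⟩
    · by_cases h1 : h = 1
      · obtain ⟨hc, hv⟩ := part2 (Or.inr h1)
        exact ⟨0, 0, le_refl 0, le_refl 0, hc, hv.symm⟩
      · obtain ⟨hc, hv⟩ := part3 ⟨lt_of_le_of_ne hh0 (Ne.symm h0), lt_of_le_of_ne hh1 h1⟩
        exact ⟨_, _, Real.sqrt_nonneg _, Real.sqrt_nonneg _, hc, hv.symm⟩
  · rintro r ⟨ap, am, hap, ham, hcon, rfl⟩
    exact key_lb _ _ _ _ hB hC hap ham hcon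
end
end

section
/- For every f ∈ S₀ and every ε > 0, there exists k ∈ ℕ (depending on f and ε) such that for all n ≥ k, inf over g ∈ S₀^{(n)} of d_□(f,g) ≤ ε. In fact the block averages f_n := Σ_{i,j∈[n]} ( n² ∫_{Q_{i,j}^n} f ) 1_{Q_{i,j}^n} satisfy d_□(f_n,f) → 0 as n→∞. -/
open MeasureTheory Filter Set
open scoped ENNReal

noncomputable section

/-- The block `Q_i^n` (1-indexed): `Q_1^n = [0, 1/n]`, `Q_i^n = ((i-1)/n, i/n]` for `i ≠ 1`. -/
def Qblk (n i : ℕ) : Set ℝ :=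
  if i = 1 then Set.Icc 0 (1 / (n : ℝ)) else Set.Ioc (((i : ℝ) - 1) / n) ((i : ℝ) / n)

/-- The block function `Σ_{i,j∈[n]} c i j · 1_{Q_{i,j}^n}(x,y)`. -/
def blockFun (n : ℕ) (c : ℕ → ℕ → ℝ) (x y : ℝ) : ℝ :=
  ∑ i ∈ Finset.Icc 1 n, ∑ j ∈ Finset.Icc 1 n,
    c i j * Set.indicator (Qblk n i) (fun _ => (1 : ℝ)) x
      * Set.indicator (Qblk n j) (fun _ => (1 : ℝ)) y

/-- The cut metric `d_□` between two kernels, taking the supremum over measurable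
subsets `S, T ⊆ [0,1]`. -/
def cutDist (f g : ℝ → ℝ → ℝ) : ℝ :=
  ⨆ (S : Set ℝ) (T : Set ℝ)
    (_ : MeasurableSet S ∧ S ⊆ I01 ∧ MeasurableSet T ∧ T ⊆ I01),
    |∫ x in S, (∫ y in T, (f x y - g x y))|

/-! The cut distance is dominated by the `L¹` distance on `[0,1]²`, so it suffices that the block
averages `f_n` converge to `f` in `L¹`. On each cell, `∫ |f - ⨍ f| ≤ 2 ∫ |f - g| + ∫ |g - ⨍ g|`
for any `g`, since averaging is an `L¹` contraction. Taking `g` uniformly continuous and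
`L¹`-close to `f`, the last term is at most the oscillation of `g` on cells of side `1/n`. -/

section SetAverage

variable {α : Type*} [MeasurableSpace α] {μ : Measure α} {s : Set α} {F G : α → ℝ}

theorem setIntegral_abs_sub_setAverage_le (hs : μ s ≠ ∞) (hF : IntegrableOn F s μ)
    (hG : IntegrableOn G s μ) :
    ∫ x in s, |F x - ⨍ y in s, F y ∂μ| ∂μ ≤
      2 * ∫ x in s, |F x - G x| ∂μ + ∫ x in s, |G x - ⨍ y in s, G y ∂μ| ∂μ := by
  set a := ⨍ y in s, F y ∂μ
  set b := ⨍ y in s, G y ∂μ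
  have hconst (c : ℝ) : IntegrableOn (fun _ => c) s μ := integrableOn_const hs
  have hFG : IntegrableOn (fun x => |F x - G x|) s μ := (hF.sub hG).abs
  have hGb : IntegrableOn (fun x => |G x - b|) s μ := (hG.sub (hconst b)).abs
  have hab : μ.real s * |b - a| ≤ ∫ x in s, |F x - G x| ∂μ := by
    calc μ.real s * |b - a| = |∫ x in s, (G x - F x) ∂μ| := by
          rw [integral_sub hG hF, ← measure_smul_setAverage _ hs,
            ← measure_smul_setAverage _ hs, smul_eq_mul, smul_eq_mul, ← mul_sub,
            abs_mul, abs_of_nonneg measureReal_nonneg]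
      _ ≤ ∫ x in s, |G x - F x| ∂μ := abs_integral_le_integral_abs
      _ = ∫ x in s, |F x - G x| ∂μ := by simp_rw [abs_sub_comm]
  calc ∫ x in s, |F x - a| ∂μ ≤ ∫ x in s, (|F x - G x| + |G x - b| + |b - a|) ∂μ := by
        refine setIntegral_mono (hF.sub (hconst a)).abs ((hFG.add hGb).add (hconst _)) fun x => ?_
        calc |F x - a| ≤ |F x - G x| + |G x - a| := abs_sub_le _ _ _
          _ ≤ |F x - G x| + (|G x - b| + |b - a|) := by gcongr; exact abs_sub_le _ _ _
          _ = _ := by ring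
    _ = ∫ x in s, |F x - G x| ∂μ + ∫ x in s, |G x - b| ∂μ + μ.real s * |b - a| := by
        rw [integral_add (f := fun x => |F x - G x| + |G x - b|) (hFG.add hGb) (hconst _),
          integral_add hFG hGb, setIntegral_const, smul_eq_mul]
    _ ≤ _ := by linarith

theorem setIntegral_abs_sub_setAverage_le_of_abs_sub_le (hs : MeasurableSet s) (h0 : μ s ≠ 0)
    (hfin : μ s ≠ ∞) (hG : IntegrableOn G s μ) {η : ℝ}
    (hosc : ∀ x ∈ s, ∀ y ∈ s, |G x - G y| ≤ η) :
    ∫ x in s, |G x - ⨍ y in s, G y ∂μ| ∂μ ≤ η * μ.real s := by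
  have hpt : ∀ x ∈ s, |G x - ⨍ y in s, G y ∂μ| ≤ η := by
    intro x hx
    have hmem : ⨍ y in s, G y ∂μ ∈ Icc (G x - η) (G x + η) :=
      (convex_Icc _ _).set_average_mem isClosed_Icc h0 hfin
        ((ae_restrict_iff' hs).2 (Eventually.of_forall fun y hy => by
          have := abs_le.1 (hosc x hx y hy); constructor <;> linarith)) hG
    exact abs_le.2 ⟨by linarith [hmem.2], by linarith [hmem.1]⟩
  calc ∫ x in s, |G x - ⨍ y in s, G y ∂μ| ∂μ
      ≤ ‖∫ x in s, |G x - ⨍ y in s, G y ∂μ| ∂μ‖ := Real.le_norm_self _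
    _ ≤ η * μ.real s := norm_setIntegral_le_of_norm_le_const hfin.lt_top
        fun x hx => by rw [Real.norm_eq_abs, abs_abs]; exact hpt x hx

end SetAverage

section Blocks

variable {n : ℕ}

theorem measurableSet_Qblk (n i : ℕ) : MeasurableSet (Qblk n i) := by
  unfold Qblk; split_ifs <;> measurability

theorem Qblk_subset_Icc (n i : ℕ) : Qblk n i ⊆ Icc (((i : ℝ) - 1) / n) ((i : ℝ) / n) := by
  unfold Qblk; split_ifs with h
  · subst h; simp
  · exact Ioc_subset_Icc_self

theorem volume_Qblk (n i : ℕ) : volume (Qblk n i) = ENNReal.ofReal (1 / n) := by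
  unfold Qblk; split_ifs
  · rw [Real.volume_Icc, sub_zero]
  · rw [Real.volume_Ioc, ← sub_div, sub_sub_cancel]

theorem abs_sub_le_of_mem_Qblk {i : ℕ} {x y : ℝ} (hx : x ∈ Qblk n i) (hy : y ∈ Qblk n i) :
    |x - y| ≤ 1 / n := by
  have h := Real.dist_le_of_mem_Icc (Qblk_subset_Icc n i hx) (Qblk_subset_Icc n i hy)
  rwa [Real.dist_eq, ← sub_div, sub_sub_cancel] at h

theorem pairwiseDisjoint_Qblk (n : ℕ) : (Ici 1 : Set ℕ).PairwiseDisjoint (Qblk n) := by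
  suffices h : ∀ i j : ℕ, 1 ≤ i → i < j → Disjoint (Qblk n i) (Qblk n j) by
    intro i hi j hj hij
    rcases lt_or_gt_of_ne hij with hlt | hlt
    exacts [h i j hi hlt, (h j i hj hlt).symm]
  intro i j hi hij
  have hleft : Qblk n i ⊆ Iic ((i : ℝ) / n) := fun x hx => (Qblk_subset_Icc n i hx).2
  have hright : Qblk n j ⊆ Ioi (((j : ℝ) - 1) / n) := by
    unfold Qblk; rw [if_neg (by omega)]; exact fun x hx => hx.1
  refine Disjoint.mono hleft hright (Iic_disjoint_Ioi ?_)
  gcongr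
  have : (i : ℝ) + 1 ≤ j := by exact_mod_cast hij
  linarith

theorem biUnion_Qblk (hn : 1 ≤ n) : ⋃ i ∈ Finset.Icc 1 n, Qblk n i = I01 := by
  have hn0 : (0 : ℝ) < n := by exact_mod_cast hn
  refine Subset.antisymm (iUnion₂_subset fun i hi => ?_) fun x ⟨hx0, hx1⟩ => ?_
  · obtain ⟨hi1, hin⟩ := Finset.mem_Icc.1 hi
    refine (Qblk_subset_Icc n i).trans (Icc_subset_Icc ?_ ?_)
    · exact div_nonneg (by simp [hi1]) hn0.le
    · rw [div_le_one hn0]; exact_mod_cast hin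
  simp only [mem_iUnion, Finset.mem_Icc, exists_prop]
  by_cases hsmall : x ≤ 1 / n
  · exact ⟨1, ⟨le_rfl, hn⟩, by rw [Qblk, if_pos rfl]; exact ⟨hx0, hsmall⟩⟩
  have hnx : 1 < n * x := by rw [not_le, div_lt_iff₀ hn0] at hsmall; linarith
  refine ⟨⌈n * x⌉₊, ⟨?_, Nat.ceil_le.2 ?_⟩, ?_⟩
  · exact (Nat.lt_ceil.2 (by exact_mod_cast hnx)).le
  · simpa using mul_le_of_le_one_right hn0.le hx1
  · have hne : ⌈n * x⌉₊ ≠ 1 := (Nat.lt_ceil.2 (by exact_mod_cast hnx)).ne'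
    simp only [Qblk, if_neg hne, mem_Ioc]
    constructor
    · rw [div_lt_iff₀ hn0]
      linarith [Nat.ceil_lt_add_one (mul_nonneg hn0.le hx0)]
    · rw [le_div_iff₀ hn0]
      linarith [Nat.le_ceil ((n : ℝ) * x)]

end Blocks

theorem integrableOn_I01_prod_of_mem_Icc {H : ℝ × ℝ → ℝ} (hm : Measurable H) {a b : ℝ}
    (hab : ∀ p ∈ I01 ×ˢ I01, H p ∈ Icc a b) : IntegrableOn H (I01 ×ˢ I01) :=
  Measure.integrableOn_of_bounded (M := max |a| |b|)
    (isCompact_Icc.prod isCompact_Icc : IsCompact (I01 ×ˢ I01)).measure_lt_top.ne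
    hm.aestronglyMeasurable
    ((ae_restrict_iff' (measurableSet_Icc.prod measurableSet_Icc)).2 (Eventually.of_forall
      fun p hp => abs_le_max_abs_abs (hab p hp).1 (hab p hp).2))

/-- The cell `Q_{i,j}^n`. -/
def cell (n : ℕ) (ij : ℕ × ℕ) : Set (ℝ × ℝ) := Qblk n ij.1 ×ˢ Qblk n ij.2

section Cells

variable {n : ℕ}

theorem measurableSet_cell (n : ℕ) (ij : ℕ × ℕ) : MeasurableSet (cell n ij) :=
  (measurableSet_Qblk n ij.1).prod (measurableSet_Qblk n ij.2)

theorem volume_cell (n : ℕ) (ij : ℕ × ℕ) :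
    volume (cell n ij) = ENNReal.ofReal (1 / n ^ 2) := by
  rw [cell, Measure.volume_eq_prod, Measure.prod_prod, volume_Qblk, volume_Qblk,
    ← ENNReal.ofReal_mul (by positivity)]
  ring_nf

theorem volume_cell_ne_zero (hn : n ≠ 0) (ij : ℕ × ℕ) : volume (cell n ij) ≠ 0 := by
  rw [volume_cell, Ne, ENNReal.ofReal_eq_zero, not_le]
  positivity

theorem volume_cell_ne_top (n : ℕ) (ij : ℕ × ℕ) : volume (cell n ij) ≠ ∞ := by
  simp [volume_cell]

theorem volume_real_cell (n : ℕ) (ij : ℕ × ℕ) : volume.real (cell n ij) = 1 / n ^ 2 := by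
  rw [measureReal_def, volume_cell, ENNReal.toReal_ofReal (by positivity)]

theorem dist_le_of_mem_cell {ij : ℕ × ℕ} {p q : ℝ × ℝ} (hp : p ∈ cell n ij)
    (hq : q ∈ cell n ij) : dist p q ≤ 1 / n := by
  rw [Prod.dist_eq, Real.dist_eq, Real.dist_eq]
  exact max_le (abs_sub_le_of_mem_Qblk hp.1 hq.1) (abs_sub_le_of_mem_Qblk hp.2 hq.2)

theorem pairwiseDisjoint_cell (n : ℕ) :
    (↑(Finset.Icc 1 n ×ˢ Finset.Icc 1 n) : Set (ℕ × ℕ)).PairwiseDisjoint (cell n) := by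
  refine ((pairwiseDisjoint_Qblk n).prod (pairwiseDisjoint_Qblk n)).subset ?_
  intro ij hij
  simp only [Finset.coe_product, Finset.coe_Icc, mem_prod, mem_Icc] at hij
  exact ⟨hij.1.1, hij.2.1⟩

theorem biUnion_cell (hn : 1 ≤ n) :
    ⋃ ij ∈ Finset.Icc 1 n ×ˢ Finset.Icc 1 n, cell n ij = I01 ×ˢ I01 := by
  ext p
  simp only [← biUnion_Qblk hn, cell, mem_iUnion, mem_prod, Finset.mem_product, exists_prop,
    Prod.exists]
  exact ⟨fun ⟨i, j, hij, hi, hj⟩ => ⟨⟨i, hij.1, hi⟩, j, hij.2, hj⟩,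
    fun ⟨⟨i, hi, hpi⟩, j, hj, hpj⟩ => ⟨i, j, ⟨hi, hj⟩, hpi, hpj⟩⟩

theorem cell_subset {ij : ℕ × ℕ} (hij : ij ∈ Finset.Icc 1 n ×ˢ Finset.Icc 1 n) :
    cell n ij ⊆ I01 ×ˢ I01 := by
  have hn : 1 ≤ n := (Finset.mem_Icc.1 (Finset.mem_product.1 hij).1).1.trans
    (Finset.mem_Icc.1 (Finset.mem_product.1 hij).1).2
  rw [← biUnion_cell hn]
  exact subset_biUnion_of_mem (u := cell n) hij

theorem setIntegral_eq_sum_cell (hn : 1 ≤ n) {H : ℝ × ℝ → ℝ}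
    (hH : IntegrableOn H (I01 ×ˢ I01)) :
    ∫ p in I01 ×ˢ I01, H p =
      ∑ ij ∈ Finset.Icc 1 n ×ˢ Finset.Icc 1 n, ∫ p in cell n ij, H p := by
  rw [← biUnion_cell hn]
  exact integral_biUnion_finset _ (fun ij _ => measurableSet_cell n ij) (pairwiseDisjoint_cell n)
    fun ij hij => hH.mono_set (cell_subset hij)

theorem setAverage_cell {ij : ℕ × ℕ} {H : ℝ × ℝ → ℝ}
    (hH : IntegrableOn H (cell n ij)) :
    ⨍ p in cell n ij, H p = n ^ 2 * ∫ x in Qblk n ij.1, ∫ y in Qblk n ij.2, H (x, y) := by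
  rw [setAverage_eq, volume_real_cell, one_div, inv_inv, smul_eq_mul, cell,
    Measure.volume_eq_prod, setIntegral_prod _ (by rwa [← Measure.volume_eq_prod])]

theorem setAverage_cell_mem_Icc (hn : n ≠ 0) {ij : ℕ × ℕ} {H : ℝ × ℝ → ℝ} {a b : ℝ}
    (hH : IntegrableOn H (cell n ij)) (hab : ∀ p ∈ cell n ij, H p ∈ Icc a b) :
    ⨍ p in cell n ij, H p ∈ Icc a b :=
  (convex_Icc a b).set_average_mem isClosed_Icc (volume_cell_ne_zero hn ij)
    (volume_cell_ne_top n ij) ((ae_restrict_iff' (measurableSet_cell n ij)).2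
      (Eventually.of_forall hab)) hH

end Cells

section BlockFun

variable {n : ℕ} {c : ℕ → ℕ → ℝ}

theorem blockFun_eq_sum_indicator (n : ℕ) (c : ℕ → ℕ → ℝ) (p : ℝ × ℝ) :
    blockFun n c p.1 p.2 =
      ∑ ij ∈ Finset.Icc 1 n ×ˢ Finset.Icc 1 n,
        (cell n ij).indicator (fun _ => c ij.1 ij.2) p := by
  rw [blockFun, Finset.sum_product]
  refine Finset.sum_congr rfl fun i _ => Finset.sum_congr rfl fun j _ => ?_
  by_cases hi : p.1 ∈ Qblk n i <;> by_cases hj : p.2 ∈ Qblk n j <;> simp [cell, hi, hj]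

theorem blockFun_eq_of_mem_cell {ij : ℕ × ℕ} (hij : ij ∈ Finset.Icc 1 n ×ˢ Finset.Icc 1 n)
    {p : ℝ × ℝ} (hp : p ∈ cell n ij) : blockFun n c p.1 p.2 = c ij.1 ij.2 := by
  rw [blockFun_eq_sum_indicator, Finset.sum_eq_single_of_mem ij hij, indicator_of_mem hp]
  exact fun kl hkl hne => indicator_of_notMem
    (disjoint_left.1 (pairwiseDisjoint_cell n hij hkl hne.symm) hp) _

theorem integrable_blockFun (n : ℕ) (c : ℕ → ℕ → ℝ) :
    Integrable (fun p : ℝ × ℝ => blockFun n c p.1 p.2) := by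
  simp_rw [blockFun_eq_sum_indicator]
  exact integrable_finsetSum _ fun ij _ => (integrable_indicator_iff (measurableSet_cell n ij)).2
    (integrableOn_const (volume_cell_ne_top n ij))

theorem blockFun_congr {c' : ℕ → ℕ → ℝ}
    (h : ∀ i ∈ Finset.Icc 1 n, ∀ j ∈ Finset.Icc 1 n, c i j = c' i j) :
    blockFun n c = blockFun n c' := by
  ext x y
  exact Finset.sum_congr rfl fun i hi => Finset.sum_congr rfl fun j hj => by rw [h i hi j hj]

end BlockFun

theorem exists_uniformContinuous_setIntegral_abs_sub_le {X : Type*} [PseudoMetricSpace X]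
    [MeasurableSpace X] [BorelSpace X] [WeaklyLocallyCompactSpace X] {μ : Measure X} [μ.Regular]
    {s : Set X} (hs : MeasurableSet s) {F : X → ℝ} (hF : IntegrableOn F s μ) {ε : ℝ}
    (hε : 0 < ε) :
    ∃ G : X → ℝ, UniformContinuous G ∧ Integrable G μ ∧ ∫ x in s, |F x - G x| ∂μ ≤ ε := by
  obtain ⟨G, hG_supp, hG_close, hG_cont, hG_int⟩ :=
    ((integrable_indicator_iff hs).2 hF).exists_hasCompactSupport_integral_sub_le hε
  refine ⟨G, hG_supp.uniformContinuous_of_continuous hG_cont, hG_int, ?_⟩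
  calc ∫ x in s, |F x - G x| ∂μ = ∫ x in s, ‖s.indicator F x - G x‖ ∂μ :=
        setIntegral_congr_fun hs fun x hx => by rw [indicator_of_mem hx, Real.norm_eq_abs]
    _ ≤ ∫ x, ‖s.indicator F x - G x‖ ∂μ :=
        setIntegral_le_integral (((integrable_indicator_iff hs).2 hF).sub hG_int).norm
          (Eventually.of_forall fun _ => norm_nonneg _)
    _ ≤ ε := hG_close

/-- The block average `f_n` of `F`. -/
def blockAvg (n : ℕ) (F : ℝ × ℝ → ℝ) : ℝ → ℝ → ℝ :=
  blockFun n fun i j => ⨍ p in cell n (i, j), F p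

section BlockAvg

variable {F : ℝ × ℝ → ℝ}

theorem setIntegral_abs_sub_blockAvg_le {n : ℕ} (hn : 1 ≤ n)
    (hF : IntegrableOn F (I01 ×ˢ I01)) {G : ℝ × ℝ → ℝ} (hG : IntegrableOn G (I01 ×ˢ I01))
    {η : ℝ} (hosc : ∀ ij, ∀ p ∈ cell n ij, ∀ q ∈ cell n ij, |G p - G q| ≤ η) :
    ∫ p in I01 ×ˢ I01, |F p - blockAvg n F p.1 p.2| ≤
      2 * (∫ p in I01 ×ˢ I01, |F p - G p|) + η := by
  have hcell : ∀ ij ∈ Finset.Icc 1 n ×ˢ Finset.Icc 1 n,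
      ∫ p in cell n ij, |F p - blockAvg n F p.1 p.2| ≤
        2 * (∫ p in cell n ij, |F p - G p|) + η * (1 / n ^ 2) := by
    intro ij hij
    have hFc := hF.mono_set (cell_subset hij)
    have hGc := hG.mono_set (cell_subset hij)
    rw [setIntegral_congr_fun (measurableSet_cell n ij)
      fun p hp => by rw [blockAvg, blockFun_eq_of_mem_cell hij hp]]
    refine (setIntegral_abs_sub_setAverage_le (volume_cell_ne_top n ij) hFc hGc).trans ?_
    rw [← volume_real_cell n ij]
    exact add_le_add le_rfl <| setIntegral_abs_sub_setAverage_le_of_abs_sub_le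
      (measurableSet_cell n ij) (volume_cell_ne_zero (by omega) ij) (volume_cell_ne_top n ij) hGc
      (hosc ij)
  have hcard : ((Finset.Icc 1 n ×ˢ Finset.Icc 1 n).card : ℝ) = n ^ 2 := by
    simp [sq]
  have hFA : IntegrableOn (fun p => |F p - blockAvg n F p.1 p.2|) (I01 ×ˢ I01) :=
    (hF.sub (integrable_blockFun n _).integrableOn).abs
  rw [setIntegral_eq_sum_cell hn hFA,
    setIntegral_eq_sum_cell hn (H := fun p => |F p - G p|) (hF.sub hG).abs, Finset.mul_sum]
  calc _ ≤ ∑ ij ∈ Finset.Icc 1 n ×ˢ Finset.Icc 1 n,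
        (2 * (∫ p in cell n ij, |F p - G p|) + η * (1 / n ^ 2)) := Finset.sum_le_sum hcell
    _ = _ := by
      rw [Finset.sum_add_distrib, Finset.sum_const, nsmul_eq_mul, hcard]
      field_simp

theorem tendsto_setIntegral_abs_sub_blockAvg (hF : IntegrableOn F (I01 ×ˢ I01)) :
    Tendsto (fun n => ∫ p in I01 ×ˢ I01, |F p - blockAvg n F p.1 p.2|) atTop (nhds 0) := by
  rw [Metric.tendsto_atTop]
  intro ε hε
  obtain ⟨G, hG_uc, hG_int, hFG⟩ := exists_uniformContinuous_setIntegral_abs_sub_le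
    (s := I01 ×ˢ I01) (measurableSet_Icc.prod measurableSet_Icc) hF (by positivity : 0 < ε / 4)
  obtain ⟨δ, hδ, hG_δ⟩ := Metric.uniformContinuous_iff.1 hG_uc (ε / 4) (by positivity)
  obtain ⟨N, hN⟩ := exists_nat_one_div_lt hδ
  refine ⟨N + 1, fun n hn => ?_⟩
  have hn1 : 1 ≤ n := by omega
  have hmesh : (1 : ℝ) / n < δ := lt_of_le_of_lt
    (one_div_le_one_div_of_le (by positivity) (by exact_mod_cast hn)) hN
  have hosc : ∀ ij, ∀ p ∈ cell n ij, ∀ q ∈ cell n ij, |G p - G q| ≤ ε / 4 :=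
    fun _ _ hp _ hq => (hG_δ ((dist_le_of_mem_cell hp hq).trans_lt hmesh)).le
  have hbound := setIntegral_abs_sub_blockAvg_le hn1 hF hG_int.integrableOn hosc
  rw [Real.dist_0_eq_abs, abs_of_nonneg (integral_nonneg fun _ => abs_nonneg _)]
  exact hbound.trans_lt (by linarith)

end BlockAvg

theorem cutDist_nonneg (f g : ℝ → ℝ → ℝ) : 0 ≤ cutDist f g :=
  Real.iSup_nonneg fun _ => Real.iSup_nonneg fun _ => Real.iSup_nonneg fun _ => abs_nonneg _

theorem cutDist_comm (f g : ℝ → ℝ → ℝ) : cutDist f g = cutDist g f := by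
  simp only [cutDist, ← neg_sub (g _ _), integral_neg, abs_neg]

theorem cutDist_le_setIntegral_abs_sub {f g : ℝ → ℝ → ℝ}
    (h : IntegrableOn (fun p : ℝ × ℝ => f p.1 p.2 - g p.1 p.2) (I01 ×ˢ I01)) :
    cutDist f g ≤ ∫ p in I01 ×ˢ I01, |f p.1 p.2 - g p.1 p.2| := by
  have h0 : 0 ≤ ∫ p in I01 ×ˢ I01, |f p.1 p.2 - g p.1 p.2| :=
    integral_nonneg fun _ => abs_nonneg _
  refine Real.iSup_le (fun S => Real.iSup_le (fun T => Real.iSup_le (fun hST => ?_) h0) h0) h0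
  obtain ⟨hS, hSI, hT, hTI⟩ := hST
  have hsub : S ×ˢ T ⊆ I01 ×ˢ I01 := prod_mono hSI hTI
  calc |∫ x in S, ∫ y in T, (f x y - g x y)|
      = |∫ p in S ×ˢ T, (f p.1 p.2 - g p.1 p.2)| := by
        rw [Measure.volume_eq_prod, setIntegral_prod _
          (by rw [← Measure.volume_eq_prod]; exact h.mono_set hsub)]
    _ ≤ ∫ p in S ×ˢ T, |f p.1 p.2 - g p.1 p.2| := abs_integral_le_integral_abs
    _ ≤ ∫ p in I01 ×ˢ I01, |f p.1 p.2 - g p.1 p.2| :=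
        setIntegral_mono_set h.abs (Eventually.of_forall fun _ => abs_nonneg _)
          hsub.eventuallyLE

/-- **Lemma (approximation of graphons by block graphons in the cut metric).**
For every `f ∈ S₀` and `ε > 0`, the distance from `f` to the block graphons `S₀^{(n)}` is
at most `ε` for all large `n`; indeed the block averages `f_n` satisfy `d_□(f_n,f) → 0`. -/
theorem block_approximation_in_cut_metric
    (f : ℝ → ℝ → ℝ) (hf_meas : Measurable (fun q : ℝ × ℝ => f q.1 q.2))
    (hf_01 : ∀ x ∈ I01, ∀ y ∈ I01, f x y ∈ Set.Icc (0:ℝ) 1) :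
    (∀ ε : ℝ, 0 < ε → ∃ k : ℕ, ∀ n : ℕ, k ≤ n →
      sInf {r : ℝ | ∃ c : ℕ → ℕ → ℝ,
          (∀ i ∈ Finset.Icc 1 n, ∀ j ∈ Finset.Icc 1 n, c i j ∈ Set.Icc (0:ℝ) 1) ∧
          r = cutDist f (blockFun n c)} ≤ ε)
    ∧ Tendsto
        (fun n : ℕ => cutDist
          (blockFun n (fun i j => (n : ℝ) ^ 2 * ∫ x in Qblk n i, (∫ y in Qblk n j, f x y)))
          f)
        atTop (nhds 0) := by
  set F : ℝ × ℝ → ℝ := fun q => f q.1 q.2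
  have hF01 : ∀ p ∈ I01 ×ˢ I01, F p ∈ Icc 0 1 := fun p hp => hf_01 _ hp.1 _ hp.2
  have hF := integrableOn_I01_prod_of_mem_Icc hf_meas hF01
  have hcell {n : ℕ} {i j : ℕ} (hi : i ∈ Finset.Icc 1 n) (hj : j ∈ Finset.Icc 1 n) :
      cell n (i, j) ⊆ I01 ×ˢ I01 := cell_subset (Finset.mem_product.2 ⟨hi, hj⟩)
  have hblock (n : ℕ) :
      blockFun n (fun i j => (n : ℝ) ^ 2 * ∫ x in Qblk n i, (∫ y in Qblk n j, f x y)) =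
        blockAvg n F :=
    blockFun_congr fun i hi j hj => (setAverage_cell (hF.mono_set (hcell hi hj))).symm
  have hcut (n : ℕ) : cutDist f (blockAvg n F) ≤
      ∫ p in I01 ×ˢ I01, |F p - blockAvg n F p.1 p.2| :=
    cutDist_le_setIntegral_abs_sub (hF.sub (integrable_blockFun n _).integrableOn)
  have hL1 := tendsto_setIntegral_abs_sub_blockAvg hF
  refine ⟨fun ε hε => ?_, ?_⟩
  · obtain ⟨k, hk⟩ := eventually_atTop.1 (hL1.eventually (ge_mem_nhds hε))
    refine ⟨k, fun n hn => csInf_le_of_le (b := cutDist f (blockAvg n F))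
      ⟨0, fun r ⟨c, _, hr⟩ => hr ▸ cutDist_nonneg _ _⟩ ⟨_, fun i hi j hj => ?_, rfl⟩
      ((hcut n).trans (hk n hn))⟩
    exact setAverage_cell_mem_Icc (by simp at hi; omega) (hF.mono_set (hcell hi hj))
      fun p hp => hF01 p (hcell hi hj hp)
  · simp_rw [hblock, cutDist_comm _ f]
    exact squeeze_zero (fun n => cutDist_nonneg _ _) hcut hL1
end
end
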